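/- arXiv:2008.05786 — 6 statements merged into one kernel-verified Lean document; each statement's English description precedes it below -/
import Mathlib

section
/- Let T be a tree on n+1 vertices with n ≥ 2, and let D(T) be its distance matrix. Then the Smith normal form of D(T) over the integers is the diagonal matrix I_2 ⊕ 2·I_{n-2} ⊕ (2n); that is, the invariant factors of D(T) are 1, 1, followed by n−2 copies of 2, followed by 2n. -/
/-!
Root the tree at `r` and let `p` send every other vertex to its neighbour towards `r`. For the
0/1 matrix `N` of `p`, `R = 1 - N` is unitriangular with respect to depth, and off the root row and
column `R D Rᵀ` has entries `d(i,j) - d(p i,j) - d(i,p j) + d(p i,p j)`. This vanishes for `i ≠ j`,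
since `d(·, j) - d(·, p j) = ±1` changes sign only across the edge `{j, p j}`, and is `-2` for
`i = j`; the root row and column are `1` off the diagonal. The resulting matrix no longer depends
on the tree, and its Smith form `1, 1, 2, …, 2, 2n` is given by explicit unimodular factors.
-/

open Matrix MvPolynomial

variable {V : Type*}

/-- The distance matrix of a graph: the `(u,v)` entry is the graph distance `d_G(u,v)`. -/
noncomputable def distMatrix [Fintype V] (G : SimpleGraph V) : Matrix V V ℤ :=
  fun u v => (G.dist u v : ℤ)

/-- The transmission of a vertex: the sum of the distances to all vertices. -/
noncomputable def transmission [Fintype V] (G : SimpleGraph V) (u : V) : ℤ :=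
  ∑ v, (G.dist u v : ℤ)

/-- The distance Laplacian matrix `D^L(G) = diag(tr) - D(G)`. -/
noncomputable def distLaplacian [Fintype V] [DecidableEq V] (G : SimpleGraph V) : Matrix V V ℤ :=
  Matrix.diagonal (transmission G) - distMatrix G

/-- The signless distance Laplacian matrix `D^Q(G) = diag(tr) + D(G)`. -/
noncomputable def signlessDistLaplacian [Fintype V] [DecidableEq V] (G : SimpleGraph V) : Matrix V V ℤ :=
  Matrix.diagonal (transmission G) + distMatrix G

/-- Two integer matrices are equivalent over `ℤ` if `M = U * N * W` with `U`, `W`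
invertible over `ℤ` (unimodular). -/
def MatEquivZ [Fintype V] [DecidableEq V] (M N : Matrix V V ℤ) : Prop :=
  ∃ U W : Matrix V V ℤ, IsUnit U.det ∧ IsUnit W.det ∧ M = U * N * W

/-- `f` lists the diagonal entries of the Smith normal form of `M`:
the diagonal matrix `diagonal f` is equivalent to `M` over `ℤ`, consecutive entries
divide each other, and the entries are nonnegative (normalization over `ℤ`). -/
def IsSNF {N : ℕ} (M : Matrix (Fin N) (Fin N) ℤ) (f : Fin N → ℤ) : Prop :=
  MatEquivZ M (Matrix.diagonal f) ∧ (∀ i j : Fin N, i ≤ j → f i ∣ f j) ∧ ∀ i, 0 ≤ f i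

/-- The ideal generated by the determinants of all `k × k` submatrices of `M`. -/
def minorsIdeal {R : Type*} [CommRing R] [Fintype V] (M : Matrix V V R) (k : ℕ) : Ideal R :=
  Ideal.span (Set.range fun p : (Fin k → V) × (Fin k → V) => (M.submatrix p.1 p.2).det)

/-- The generalized distance matrix `D(G, X_G) = diag(X_G) + D(G)` over `ℤ[X_G]`. -/
noncomputable def genDistMatrix [Fintype V] [DecidableEq V] (G : SimpleGraph V) :
    Matrix V V (MvPolynomial V ℤ) :=
  Matrix.diagonal (fun u => MvPolynomial.X u) +
    (distMatrix G).map (fun a => (a : MvPolynomial V ℤ))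

/-- The `k`-th distance ideal `I_k(G, X_G)`: the ideal of `ℤ[X_G]` generated by the
determinants of all `k × k` submatrices of the generalized distance matrix. -/
noncomputable def distIdeal [Fintype V] [DecidableEq V] (G : SimpleGraph V) (k : ℕ) :
    Ideal (MvPolynomial V ℤ) :=
  minorsIdeal (genDistMatrix G) k


theorem MatEquivZ.of_mul_mul [Fintype V] [DecidableEq V] {M N P Q : Matrix V V ℤ}
    (hP : IsUnit P.det) (hQ : IsUnit Q.det) (h : MatEquivZ (P * M * Q) N) : MatEquivZ M N := by
  obtain ⟨U, W, hU, hW, hPMQ⟩ := h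
  refine ⟨P⁻¹ * U, W * Q⁻¹, ?_, ?_, ?_⟩
  · rw [det_mul]; exact (isUnit_nonsing_inv_det P hP).mul hU
  · rw [det_mul]; exact hW.mul (isUnit_nonsing_inv_det Q hQ)
  · calc M = P⁻¹ * (P * M * Q) * Q⁻¹ := by
          simp only [← mul_assoc, nonsing_inv_mul P hP, one_mul]
          rw [mul_assoc, mul_nonsing_inv Q hQ, mul_one]
      _ = P⁻¹ * U * N * (W * Q⁻¹) := by rw [hPMQ]; noncomm_ring

def grahamPollakMatrix [DecidableEq V] (r : V) : Matrix V V ℤ :=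
  of fun i j => (if i = r then 1 else 0) + (if j = r then 1 else 0) - if i = j then 2 else 0

section ParentMatrix

variable [DecidableEq V] (r : V) (p : V → V)

def parentMatrix : Matrix V V ℤ := of fun i j => if i ≠ r ∧ p i = j then 1 else 0

variable [Fintype V]

theorem parentMatrix_mul_apply (A : Matrix V V ℤ) (i j : V) :
    (parentMatrix r p * A) i j = if i = r then 0 else A (p i) j := by
  by_cases hi : i = r <;> simp [parentMatrix, mul_apply, hi, ite_and]

theorem mul_parentMatrix_transpose_apply (A : Matrix V V ℤ) (i j : V) :
    (A * (parentMatrix r p)ᵀ) i j = if j = r then 0 else A i (p j) := by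
  by_cases hj : j = r <;> simp [parentMatrix, mul_apply, hj, ite_and]

end ParentMatrix

namespace SimpleGraph

variable {G T : SimpleGraph V}

def IsParentMap (G : SimpleGraph V) (r : V) (p : V → V) : Prop :=
  ∀ i ≠ r, G.Adj i (p i) ∧ G.dist (p i) r + 1 = G.dist i r

theorem Connected.exists_isParentMap (hG : G.Connected) (r : V) : ∃ p, G.IsParentMap r p := by
  have : ∀ i, ∃ q, i ≠ r → G.Adj i q ∧ G.dist q r + 1 = G.dist i r := by
    intro i
    obtain ⟨w, hw⟩ := hG.exists_walk_length_eq_dist i r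
    cases w with
    | nil => exact ⟨r, fun h => (h rfl).elim⟩
    | @cons _ q _ hadj w =>
      refine ⟨q, fun _ => ⟨hadj, ?_⟩⟩
      have := dist_le w
      have := hG.dist_triangle (u := i) (v := q) (w := r)
      rw [dist_eq_one_iff_adj.mpr hadj] at this
      rw [Walk.length_cons] at hw
      omega
  choose p hp using this
  exact ⟨p, hp⟩

theorem IsTree.length_eq_dist (hT : T.IsTree) {u v : V} {p : T.Walk u v} (hp : p.IsPath) :
    p.length = T.dist u v := by
  obtain ⟨q, hq, hql⟩ := hT.connected.exists_path_of_dist u v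
  rw [(hT.existsUnique_path u v).unique hp hq, hql]

theorem IsTree.dist_add_dist_of_mem_support (hT : T.IsTree) {u v x : V}
    {p : T.Walk u v} (hp : p.IsPath) (hx : x ∈ p.support) :
    T.dist u x + T.dist x v = T.dist u v := by
  classical
  rw [← hT.length_eq_dist (hp.takeUntil hx), ← hT.length_eq_dist (hp.dropUntil hx),
    ← hT.length_eq_dist hp, ← Walk.length_append, p.take_spec hx]

theorem IsTree.dist_eq_add_one_or_of_adj (hT : T.IsTree) {x y : V} (h : T.Adj x y) (u : V) :
    T.dist u y = T.dist u x + 1 ∨ T.dist u x = T.dist u y + 1 := by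
  obtain ⟨p, hp, hpl⟩ := hT.connected.exists_path_of_dist u x
  by_cases hy : y ∈ p.support
  · right
    rw [← hT.dist_add_dist_of_mem_support hp hy, dist_comm, dist_eq_one_iff_adj.mpr h.symm]
  · left
    rw [← hT.length_eq_dist (hp.concat hy h), Walk.length_concat, hpl]

theorem IsTree.edge_eq_of_dist_lt_of_dist_lt (hT : T.IsTree) {x y u v : V}
    (hxy : T.Adj x y) (huv : T.Adj u v) (hu : T.dist u x < T.dist u y)
    (hv : T.dist v y < T.dist v x) : s(u, v) = s(x, y) := by
  obtain ⟨p, hp, hpl⟩ := hT.connected.exists_path_of_dist u x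
  obtain ⟨q, hq, hql⟩ := hT.connected.exists_path_of_dist v y
  have hxy₁ : T.dist x y = 1 := dist_eq_one_iff_adj.mpr hxy
  have hvu₁ : T.dist v u = 1 := dist_eq_one_iff_adj.mpr huv.symm
  have hyp : y ∉ p.support := fun hy => by
    have := hT.dist_add_dist_of_mem_support hp hy
    omega
  have huq : u ∉ q.support := fun hu' => by
    have := hT.dist_add_dist_of_mem_support hq hu'
    have := hT.dist_eq_add_one_or_of_adj hxy u
    have := hT.connected.dist_triangle (u := v) (v := u) (w := x)
    omega
  have hpath := (hT.existsUnique_path u y).unique (hp.concat hyp hxy)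
    (Walk.IsPath.cons (h := huv) hq huq)
  have hedge : s(x, y) ∈ (Walk.cons huv q).edges := by
    rw [← hpath, Walk.edges_concat]; simp
  rw [Walk.edges_cons, List.mem_cons] at hedge
  refine (hedge.resolve_right fun hxq => ?_).symm
  have := hT.dist_add_dist_of_mem_support hq (q.fst_mem_support_of_mem_edges hxq)
  omega

theorem IsParentMap.dist_sub_dist_eq (hT : T.IsTree) {r : V} {p : V → V} (hp : T.IsParentMap r p)
    {i j : V} (hi : i ≠ r) (hj : j ≠ r) (hij : i ≠ j) :
    (T.dist i j : ℤ) - T.dist i (p j) = T.dist (p i) j - T.dist (p i) (p j) := by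
  obtain ⟨hadj_i, hdepth_i⟩ := hp i hi
  obtain ⟨hadj_j, hdepth_j⟩ := hp j hj
  have not_edge : s(i, p i) ≠ s(j, p j) := by
    rw [Ne, Sym2.eq_iff]
    rintro (⟨rfl, -⟩ | ⟨rfl, h⟩)
    · exact hij rfl
    · rw [h] at hdepth_i
      omega
  rcases hT.dist_eq_add_one_or_of_adj hadj_j i with hi' | hi' <;>
    rcases hT.dist_eq_add_one_or_of_adj hadj_j (p i) with hpi | hpi
  · omega
  · exact (not_edge (hT.edge_eq_of_dist_lt_of_dist_lt hadj_j hadj_i (by omega) (by omega))).elim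
  · exact (not_edge ((hT.edge_eq_of_dist_lt_of_dist_lt hadj_j.symm hadj_i (by omega)
      (by omega)).trans Sym2.eq_swap)).elim
  · omega

theorem IsParentMap.det_one_sub_parentMatrix [Fintype V] [DecidableEq V] {r : V} {p : V → V}
    (hp : G.IsParentMap r p) : (1 - parentMatrix r p).det = 1 := by
  have hdepth : ∀ i j, i ≠ r → p i = j → G.dist j r < G.dist i r := by
    rintro i j hi rfl
    have := (hp i hi).2
    omega
  have htri : (1 - parentMatrix r p)ᵀ.BlockTriangular (G.dist · r) := by
    intro i j hij
    have hji : j ≠ i := by rintro rfl; exact lt_irrefl _ hij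
    have : ¬(j ≠ r ∧ p j = i) := fun h => (hdepth j i h.1 h.2).not_gt hij
    simp [parentMatrix, one_apply, hji, this]
  rw [← det_transpose, htri.det]
  refine Finset.prod_eq_one fun k _ => ?_
  suffices (1 - parentMatrix r p)ᵀ.toSquareBlock (G.dist · r) k = 1 by rw [this, det_one]
  ext ⟨i, hi⟩ ⟨j, hj⟩
  have : ¬(j ≠ r ∧ p j = i) := fun h => (hdepth j i h.1 h.2).ne (hi.trans hj.symm)
  simp [toSquareBlock_def, parentMatrix, one_apply, this]

theorem IsParentMap.conj_distMatrix [Fintype V] [DecidableEq V] (hT : T.IsTree) {r : V}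
    {p : V → V} (hp : T.IsParentMap r p) :
    (1 - parentMatrix r p) * distMatrix T * (1 - parentMatrix r p)ᵀ = grahamPollakMatrix r := by
  ext i j
  simp only [transpose_sub, transpose_one, sub_mul, mul_sub, one_mul, mul_one, Matrix.sub_apply,
    mul_assoc, parentMatrix_mul_apply, mul_parentMatrix_transpose_apply, grahamPollakMatrix,
    of_apply, distMatrix]
  by_cases hi : i = r <;> by_cases hj : j = r
  · simp [hi, hj]
  · have := (hp j hj).2
    rw [dist_comm (u := j), dist_comm (u := p j)] at this
    simp [hi, hj, Ne.symm hj]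
    omega
  · have := (hp i hi).2
    simp [hi, hj]
    omega
  rcases eq_or_ne i j with rfl | hij
  · have h₁ : T.dist i (p i) = 1 := dist_eq_one_iff_adj.mpr (hp i hi).1
    have h₂ : T.dist (p i) i = 1 := dist_eq_one_iff_adj.mpr (hp i hi).1.symm
    simp [hi, h₁, h₂]
  · have := hp.dist_sub_dist_eq hT hi hj hij
    simp [hi, hj, hij]
    linarith

end SimpleGraph

section SmithForm

variable [DecidableEq V]

theorem one_row (i : V) : (1 : Matrix V V ℤ) i = Pi.single i 1 := by
  ext j; simp [one_apply, Pi.single_apply, eq_comm]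

theorem grahamPollakMatrix_self_row (a : V) : grahamPollakMatrix a a = 1 - Pi.single a 1 := by
  ext k
  rcases eq_or_ne k a with rfl | hk
  · simp [grahamPollakMatrix]
  · simp [grahamPollakMatrix, hk, hk.symm]

theorem grahamPollakMatrix_row_of_ne {a i : V} (hi : i ≠ a) :
    grahamPollakMatrix a i = Pi.single a 1 - 2 • Pi.single i 1 := by
  ext k
  rcases eq_or_ne k a with rfl | hka
  · simp [grahamPollakMatrix, hi]
  rcases eq_or_ne k i with rfl | hki
  · simp [grahamPollakMatrix, hi]
  · simp [grahamPollakMatrix, hi, hka, hki, hki.symm]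

variable [Fintype V]

theorem diagonal_mul_row (d : V → ℤ) (B : Matrix V V ℤ) (i : V) :
    (diagonal d * B) i = d i • B i := by
  ext j; simp [diagonal_mul]

variable (a b c : V)

def complOnes : V → ℤ := ∑ l ∈ ({a, b, c} : Finset V)ᶜ, Pi.single l 1

def grahamPollakSmith : V → ℤ := fun i =>
  if i = a ∨ i = b then 1 else if i = c then 2 * (Fintype.card V - 1) else 2

/- The matrices below are written as families of rows. `grahamPollakLeft` and `grahamPollakRight`
undo the reduction of `grahamPollakMatrix a` that subtracts row `b` from the rows outside `{a, b}`,
clears rows and columns `a`, `b` with the pivots `(a, b)`, `(b, a)`, and brings the remaining block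
`-2 (I + J)` to `diag(2, …, 2, 2 (|V| - 1))` by row and column operations through `c`. -/

def grahamPollakLeft : Matrix V V ℤ := fun i =>
  if i = a then Pi.single b 1 else if i = b then Pi.single a 1
  else Pi.single a 1 + 2 • Pi.single b 1 - Pi.single i 1 + if i = c then complOnes a b c else 0

def grahamPollakLeftInv : Matrix V V ℤ := fun i =>
  if i = a then Pi.single b 1 else if i = b then Pi.single a 1
  else if i = c then
    (Fintype.card V - 2 : ℤ) • (2 • Pi.single a 1 + Pi.single b 1) - Pi.single c 1 - complOnes a b c
  else 2 • Pi.single a 1 + Pi.single b 1 - Pi.single i 1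

def grahamPollakRight : Matrix V V ℤ := fun i =>
  if i = a then Pi.single a 1 - 2 • Pi.single b 1
  else (if i = c then 0 else Pi.single i 1) + Pi.single c 1 + complOnes a b c

def grahamPollakRightInv : Matrix V V ℤ := fun i =>
  if i = a then Pi.single a 1 + 2 • Pi.single b 1 - 2 • Pi.single c 1
  else if i = c then (Fintype.card V - 2 : ℤ) • Pi.single c 1 - complOnes a b c
  else Pi.single i 1 - Pi.single c 1

variable {a b c}

theorem grahamPollakLeft_mul_row (B : Matrix V V ℤ) (i : V) :
    (grahamPollakLeft a b c * B) i = if i = a then B b else if i = b then B a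
      else B a + 2 • B b - B i + if i = c then ∑ l ∈ ({a, b, c} : Finset V)ᶜ, B l else 0 := by
  rw [mul_apply_eq_vecMul]
  dsimp only [grahamPollakLeft]
  split_ifs <;> simp only [add_vecMul, sub_vecMul, smul_vecMul, single_one_vecMul, row, complOnes,
    sum_vecMul, add_zero]

theorem grahamPollakRight_mul_row (B : Matrix V V ℤ) (i : V) :
    (grahamPollakRight a b c * B) i = if i = a then B a - 2 • B b
      else (if i = c then 0 else B i) + B c + ∑ l ∈ ({a, b, c} : Finset V)ᶜ, B l := by
  rw [mul_apply_eq_vecMul]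
  dsimp only [grahamPollakRight]
  split_ifs <;> simp only [add_vecMul, sub_vecMul, smul_vecMul, single_one_vecMul, row, complOnes,
    sum_vecMul, zero_add]

theorem one_eq_add_complOnes (hab : a ≠ b) (hac : a ≠ c) (hbc : b ≠ c) :
    (1 : V → ℤ) = Pi.single a 1 + Pi.single b 1 + Pi.single c 1 + complOnes a b c := by
  have h := Finset.univ_sum_single (1 : V → ℤ)
  simp only [Pi.one_apply] at h
  rw [complOnes, ← h, ← Finset.sum_add_sum_compl {a, b, c}, Finset.sum_insert (by simp [hab, hac]),
    Finset.sum_pair hbc]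
  abel

theorem sum_compl_triple (hab : a ≠ b) (hac : a ≠ c) (hbc : b ≠ c) {f : V → V → ℤ}
    (x : V → ℤ) (m : ℤ) (hf : ∀ l, l ≠ a → l ≠ b → l ≠ c → f l = x + m • Pi.single l 1) :
    ∑ l ∈ ({a, b, c} : Finset V)ᶜ, f l = (Fintype.card V - 3 : ℤ) • x + m • complOnes a b c := by
  have hcard : ({a, b, c} : Finset V).card = 3 := by
    rw [Finset.card_insert_of_notMem (by simp [hab, hac]), Finset.card_pair hbc]
  have := Finset.card_le_univ ({a, b, c} : Finset V)
  rw [Finset.sum_congr rfl fun l hl => hf l (by simp_all) (by simp_all) (by simp_all),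
    Finset.sum_add_distrib, Finset.sum_const, ← Finset.smul_sum, complOnes, ← natCast_zsmul,
    Finset.card_compl]
  congr 2
  omega

theorem grahamPollakMatrix_eq_left_mul_smith_mul_right (hab : a ≠ b) (hac : a ≠ c) (hbc : b ≠ c) :
    grahamPollakMatrix a =
      grahamPollakLeft a b c * (diagonal (grahamPollakSmith a b c) * grahamPollakRight a b c) := by
  funext i
  simp only [grahamPollakLeft_mul_row, diagonal_mul_row]
  have hgeneric : ∀ l, l ≠ a → l ≠ b → l ≠ c →
      grahamPollakSmith a b c l • grahamPollakRight a b c l =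
        2 • (Pi.single c 1 + complOnes a b c) + 2 • Pi.single l 1 := fun l hla hlb hlc => by
    simp only [grahamPollakSmith, grahamPollakRight, hla, hlb, hlc, or_self, if_false]
    module
  rw [sum_compl_triple hab hac hbc _ _ hgeneric]
  have := hab.symm; have := hac.symm; have := hbc.symm
  by_cases hia : i = a
  · rw [hia, grahamPollakMatrix_self_row, one_eq_add_complOnes hab hac hbc]
    simp [grahamPollakSmith, grahamPollakRight, *]
    ring
  by_cases hib : i = b
  · rw [hib, grahamPollakMatrix_row_of_ne hab.symm]
    simp [grahamPollakSmith, grahamPollakRight, *]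
  rw [grahamPollakMatrix_row_of_ne hia]
  by_cases hic : i = c
  · rw [hic]
    simp [grahamPollakSmith, grahamPollakRight, *]
    ring
  · simp [grahamPollakSmith, grahamPollakRight, *]
    ring

theorem grahamPollakLeft_mul_grahamPollakLeftInv (hab : a ≠ b) (hac : a ≠ c) (hbc : b ≠ c) :
    grahamPollakLeft a b c * grahamPollakLeftInv a b c = 1 := by
  funext i
  have hgeneric : ∀ l, l ≠ a → l ≠ b → l ≠ c → grahamPollakLeftInv a b c l =
      (2 • Pi.single a 1 + Pi.single b 1) + (-1 : ℤ) • Pi.single l 1 := fun l hla hlb hlc => by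
    simp only [grahamPollakLeftInv, hla, hlb, hlc, if_false]
    module
  rw [grahamPollakLeft_mul_row, one_row, sum_compl_triple hab hac hbc _ _ hgeneric]
  have := hab.symm; have := hac.symm; have := hbc.symm
  by_cases hia : i = a
  · rw [hia]; simp [grahamPollakLeftInv, *]
  by_cases hib : i = b
  · rw [hib]; simp [grahamPollakLeftInv, *]
  by_cases hic : i = c
  · rw [hic]; simp [grahamPollakLeftInv, *]; ring
  · simp [grahamPollakLeftInv, *]; ring

theorem grahamPollakRight_mul_grahamPollakRightInv (hab : a ≠ b) (hac : a ≠ c) (hbc : b ≠ c) :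
    grahamPollakRight a b c * grahamPollakRightInv a b c = 1 := by
  funext i
  have hgeneric : ∀ l, l ≠ a → l ≠ b → l ≠ c → grahamPollakRightInv a b c l =
      -Pi.single c 1 + (1 : ℤ) • Pi.single l 1 := fun l hla _ hlc => by
    simp only [grahamPollakRightInv, hla, hlc, if_false]
    module
  rw [grahamPollakRight_mul_row, one_row, sum_compl_triple hab hac hbc _ _ hgeneric]
  have := hab.symm; have := hac.symm; have := hbc.symm
  by_cases hia : i = a
  · rw [hia]; simp [grahamPollakRightInv, *]; ring
  by_cases hic : i = c
  · rw [hic]; simp [grahamPollakRightInv, *]; ring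
  · simp [grahamPollakRightInv, *]; ring

theorem matEquivZ_grahamPollakMatrix (hab : a ≠ b) (hac : a ≠ c) (hbc : b ≠ c) :
    MatEquivZ (grahamPollakMatrix a) (diagonal (grahamPollakSmith a b c)) :=
  ⟨grahamPollakLeft a b c, grahamPollakRight a b c,
    isUnit_det_of_right_inverse (grahamPollakLeft_mul_grahamPollakLeftInv hab hac hbc),
    isUnit_det_of_right_inverse (grahamPollakRight_mul_grahamPollakRightInv hab hac hbc),
    by rw [grahamPollakMatrix_eq_left_mul_smith_mul_right hab hac hbc, mul_assoc]⟩

end SmithForm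

theorem Fin.val_one_of_ne_zero {n : ℕ} (hn : n ≠ 0) : ((1 : Fin (n + 1)) : ℕ) = 1 := by
  rw [Fin.val_one', Nat.mod_eq_of_lt (by omega)]

theorem grahamPollakSmith_fin {n : ℕ} (hn : 2 ≤ n) :
    grahamPollakSmith (0 : Fin (n + 1)) 1 (Fin.last n) =
      fun i : Fin (n + 1) => if (i : ℕ) < 2 then (1 : ℤ) else if (i : ℕ) < n then 2 else 2 * n := by
  have hv1 := Fin.val_one_of_ne_zero (n := n) (by omega)
  funext i
  have := i.isLt
  simp only [grahamPollakSmith, Fin.ext_iff, hv1, Fin.val_zero, Fin.val_last, Fintype.card_fin]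
  split_ifs <;> first | rfl | omega

/-- For a tree `T` on `n+1` vertices with `n ≥ 2`, the Smith normal form of
its distance matrix is `I₂ ⊕ 2·I_{n-2} ⊕ (2n)`, i.e. `D(T)` is equivalent over `ℤ` to the
diagonal matrix with entries `1, 1, 2, …, 2, 2n` (which satisfies the divisibility
conditions, hence is the SNF). -/
theorem snf_distMatrix_tree (n : ℕ) (hn : 2 ≤ n) (T : SimpleGraph (Fin (n + 1)))
    (hT : T.IsTree) :
    MatEquivZ (distMatrix T)
      (Matrix.diagonal fun i : Fin (n + 1) =>
        if (i : ℕ) < 2 then (1 : ℤ) else if (i : ℕ) < n then 2 else 2 * n) := by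
  obtain ⟨p, hp⟩ := hT.connected.exists_isParentMap 0
  have hR : IsUnit (1 - parentMatrix 0 p).det := by
    rw [hp.det_one_sub_parentMatrix]; exact isUnit_one
  refine MatEquivZ.of_mul_mul hR (by rwa [det_transpose]) ?_
  rw [hp.conj_distMatrix hT, ← grahamPollakSmith_fin hn]
  have hv1 := Fin.val_one_of_ne_zero (n := n) (by omega)
  exact matEquivZ_grahamPollakMatrix (by rw [Ne, Fin.ext_iff, hv1, Fin.val_zero]; omega)
    (by rw [Ne, Fin.ext_iff, Fin.val_last, Fin.val_zero]; omega)
    (by rw [Ne, Fin.ext_iff, Fin.val_last, hv1]; omega)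
end

section
/- For any tree T on n+1 vertices (n ≥ 1), the determinant of its distance matrix satisfies det(D(T)) = (−1)^n · n · 2^{n−1}. -/
open Matrix MvPolynomial

variable {V : Type*}

set_option linter.unusedSectionVars false
namespace GPaux
open Matrix Finset

open SimpleGraph Walk

variable {W : Type*} [DecidableEq W] {G : SimpleGraph W}

lemma concat_isPath {u v w : W} {p : G.Walk u v} (h : G.Adj v w) (hp : p.IsPath)
    (hw : w ∉ p.support) : (p.concat h).IsPath := by
  rw [← Walk.isPath_reverse_iff, Walk.reverse_concat, Walk.cons_isPath_iff]
  exact ⟨hp.reverse, by simpa using hw⟩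

lemma tree_path_length (hT : G.IsTree) {u v : W} {p : G.Walk u v} (hp : p.IsPath) :
    p.length = G.dist u v := by
  obtain ⟨q, hq, hql⟩ := hT.isConnected.exists_path_of_dist u v
  rw [(hT.existsUnique_path u v).unique hp hq, hql]

lemma dist_split (hconn : G.Connected) {u v b : W} {p : G.Walk u v}
    (hl : p.length = G.dist u v) (hb : b ∈ p.support) :
    G.dist u b + G.dist b v = G.dist u v := by
  have h1 := SimpleGraph.dist_le (p.takeUntil b hb)
  have h2 := SimpleGraph.dist_le (p.dropUntil b hb)
  have h3 : (p.takeUntil b hb).length + (p.dropUntil b hb).length = p.length := by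
    rw [← Walk.length_append, Walk.take_spec]
  have h4 := hconn.dist_triangle (u := u) (v := b) (w := v)
  omega

lemma tree_adj_dist (hT : G.IsTree) {a b : W} (hab : G.Adj a b) (w : W) :
    G.dist w a = G.dist w b + 1 ∨ G.dist w b = G.dist w a + 1 := by
  obtain ⟨p, hp, hl⟩ := hT.isConnected.exists_path_of_dist w a
  by_cases hb : b ∈ p.support
  · left
    have hsplit := dist_split hT.isConnected hl hb
    have hba : G.dist b a = 1 := dist_eq_one_iff_adj.2 hab.symm
    omega
  · right
    have hq : (p.concat hab).IsPath := concat_isPath hab hp hb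
    have h2 := tree_path_length hT hq
    rw [Walk.length_concat] at h2
    omega

lemma tree_edge_side (hT : G.IsTree) {a b u v : W} (hab : G.Adj a b) (huv : G.Adj u v)
    (h1 : G.dist u a = G.dist u b + 1) (h2 : G.dist v b = G.dist v a + 1) :
    u = b ∧ v = a := by
  have hconn := hT.isConnected
  have e1 := hconn.dist_triangle (u := u) (v := v) (w := a)
  have e2 := hconn.dist_triangle (u := v) (v := u) (w := b)
  have duv : G.dist u v = 1 := dist_eq_one_iff_adj.2 huv
  have dvu : G.dist v u = 1 := dist_eq_one_iff_adj.2 huv.symm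
  have hk : G.dist u b = G.dist v a := by omega
  by_cases hk0 : G.dist u b = 0
  · exact ⟨hconn.dist_eq_zero_iff.1 hk0, hconn.dist_eq_zero_iff.1 (by omega)⟩
  exfalso
  obtain ⟨P, hP, hPl⟩ := hconn.exists_path_of_dist v a
  obtain ⟨P', hP', hP'l⟩ := hconn.exists_path_of_dist u b
  have hu_nmem : u ∉ P.support := by
    intro h
    have := dist_split hconn hPl h
    omega
  have hW1 : (Walk.cons huv P).IsPath := (Walk.cons_isPath_iff _ _).2 ⟨hP, hu_nmem⟩
  have dab : G.dist a b = 1 := dist_eq_one_iff_adj.2 hab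
  have ha_nmem : a ∉ P'.support := by
    intro h
    have := dist_split hconn hP'l h
    omega
  have hW2 : (P'.concat hab.symm).IsPath := concat_isPath hab.symm hP' ha_nmem
  have heq : Walk.cons huv P = P'.concat hab.symm :=
    (hT.existsUnique_path u a).unique hW1 hW2
  have hb2 : b ∈ (P'.concat hab.symm).support := by
    rw [Walk.support_concat]
    simp only [List.concat_eq_append, List.mem_append]
    exact Or.inl P'.end_mem_support
  rw [← heq, Walk.support_cons] at hb2
  rcases List.mem_cons.1 hb2 with hbu | hbP
  · rw [← hbu] at hk0
    exact hk0 (by simp [SimpleGraph.dist_self])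
  · have := dist_split hconn hPl hbP
    have dba : G.dist b a = 1 := dist_eq_one_iff_adj.2 hab.symm
    omega

lemma exists_parent (hconn : G.Connected) {r v : W} (hv : v ≠ r) :
    ∃ u, G.Adj v u ∧ G.dist r u + 1 = G.dist r v := by
  obtain ⟨p, hp, hl⟩ := hconn.exists_path_of_dist v r
  have hd : G.dist v r ≠ 0 := fun h => hv (hconn.dist_eq_zero_iff.1 h)
  cases p with
  | nil => rw [Walk.length_nil] at hl; exact absurd hl.symm hd
  | @cons _ x _ h q =>
    refine ⟨x, h, ?_⟩
    have h1 : G.dist x r ≤ q.length := SimpleGraph.dist_le q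
    have h3 := hconn.dist_triangle (u := v) (v := x) (w := r)
    have h4 : G.dist v x = 1 := dist_eq_one_iff_adj.2 h
    rw [Walk.length_cons] at hl
    rw [SimpleGraph.dist_comm (G := G) (u := r) (v := x), SimpleGraph.dist_comm (G := G) (u := r) (v := v)]
    omega

lemma four_point (hT : G.IsTree) {r : W} {p : W → W}
    (hp1 : ∀ v, v ≠ r → G.Adj v (p v)) (hp2 : ∀ v, v ≠ r → G.dist r (p v) + 1 = G.dist r v)
    {i j : W} (hi : i ≠ r) (hj : j ≠ r) (hij : i ≠ j) :
    G.dist i j + G.dist (p i) (p j) = G.dist (p i) j + G.dist i (p j) := by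
  have hadj_i := hp1 i hi
  have hadj_j := hp1 j hj
  rcases tree_adj_dist hT hadj_j i with c1 | c1 <;>
    rcases tree_adj_dist hT hadj_j (p i) with c2 | c2
  · omega
  · exfalso
    obtain ⟨e1, e2⟩ := tree_edge_side hT hadj_j hadj_i c1 c2
    have d1 := hp2 i hi
    have d2 := hp2 j hj
    rw [← e1] at d2
    rw [e2] at d1
    omega
  · exfalso
    obtain ⟨e1, e2⟩ := tree_edge_side hT hadj_j hadj_i.symm c2 c1
    exact hij e2
  · omega

end GPaux


namespace GPaux
open Matrix Finset

lemma det_eq_one_of_wt {m : Type*} [Fintype m] [DecidableEq m]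
    (w : m → ℕ) (U : Matrix m m ℤ)
    (h : ∀ i j, w i ≤ w j → U i j = if i = j then 1 else 0) : U.det = 1 := by
  have hbt : Uᵀ.BlockTriangular w := by
    intro i j hij
    rw [Matrix.transpose_apply, h j i hij.le, if_neg]
    rintro rfl
    exact lt_irrefl _ hij
  rw [← Matrix.det_transpose, hbt.det]
  refine Finset.prod_eq_one fun a _ => ?_
  have hblock : Uᵀ.toSquareBlock w a = 1 := by
    ext i j
    simp only [Matrix.toSquareBlock_def, Matrix.of_apply, Matrix.transpose_apply,
      Matrix.one_apply]
    rw [h j.1 i.1 (by rw [i.2, j.2])]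
    by_cases hij : i = j
    · simp [hij]
    · rw [if_neg fun e => hij (Subtype.ext e.symm), if_neg hij]
  rw [hblock, Matrix.det_one]

lemma det_A (n : ℕ) (hn : 1 ≤ n) (A : Matrix (Fin (n+1)) (Fin (n+1)) ℤ)
    (hA : ∀ i j, A i j =
      if i = 0 then (if j = 0 then 0 else 1)
      else if j = 0 then 1 else if i = j then -2 else 0) :
    A.det = (-1) ^ n * n * 2 ^ (n - 1) := by
  -- work over ℚ
  set Aq : Matrix (Fin (n+1)) (Fin (n+1)) ℚ := A.map (Int.cast : ℤ → ℚ) with hAq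
  have hAqe : ∀ i j, Aq i j =
      if i = 0 then (if j = 0 then 0 else 1)
      else if j = 0 then 1 else if i = j then -2 else 0 := by
    intro i j
    rw [hAq, Matrix.map_apply, hA i j]
    split_ifs <;> norm_num
  set L : Matrix (Fin (n+1)) (Fin (n+1)) ℚ :=
    Matrix.of fun i j => if i = j then 1 else if i = 0 then (1/2 : ℚ) else 0 with hL
  have hLdet : L.det = 1 := by
    rw [Matrix.det_of_upperTriangular (M := L)]
    · exact Finset.prod_eq_one fun i _ => by simp [hL]
    · intro i j hij
      have hne : i ≠ j := fun e => by subst e; exact lt_irrefl _ hij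
      have hi0 : i ≠ 0 := Fin.pos_iff_ne_zero.1 (lt_of_le_of_lt (Fin.zero_le j) hij)
      simp [hL, hne, hi0]
  set B : Matrix (Fin (n+1)) (Fin (n+1)) ℚ := L * Aq with hB
  have hBe : ∀ i j, B i j =
      if i = 0 then (if j = 0 then (n : ℚ)/2 else 0) else Aq i j := by
    intro i j
    rw [hB, Matrix.mul_apply]
    by_cases hi : i = 0
    · subst hi
      by_cases hj : j = 0
      · subst hj
        rw [if_pos rfl, if_pos rfl]
        rw [← Finset.sum_erase_add _ _ (Finset.mem_univ (0 : Fin (n+1)))]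
        rw [Finset.sum_congr rfl (fun k hk => by
          rw [hAqe k 0, hL]
          have hk0 : k ≠ 0 := (Finset.mem_erase.1 hk).1
          simp [hk0, Ne.symm hk0] : ∀ k ∈ Finset.univ.erase (0 : Fin (n+1)),
            L 0 k * Aq k 0 = 1/2)]
        rw [Finset.sum_const, Finset.card_erase_of_mem (Finset.mem_univ _), Finset.card_univ]
        simp [hAqe]
        ring
      · rw [if_pos rfl, if_neg hj]
        have hsub : (Finset.univ : Finset (Fin (n+1))).sum (fun k => L 0 k * Aq k j)
            = ({0, j} : Finset (Fin (n+1))).sum (fun k => L 0 k * Aq k j) := by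
          refine (Finset.sum_subset (Finset.subset_univ _) ?_).symm
          intro k _ hk
          simp only [Finset.mem_insert, Finset.mem_singleton, not_or] at hk
          rw [hAqe]
          simp [hk.1, hk.2, hj]
        rw [hsub, Finset.sum_pair (Ne.symm hj)]
        rw [hAqe, hAqe, hL]
        simp only [Matrix.of_apply, if_pos rfl, if_neg hj, if_neg (Ne.symm hj), ite_self]
        norm_num
    · rw [if_neg hi]
      rw [Finset.sum_congr rfl (fun k _ => by
        rw [hL]
        simp only [Matrix.of_apply, hi, if_false] : ∀ k ∈ (Finset.univ : Finset (Fin (n+1))),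
          L i k * Aq k j = (if i = k then 1 else 0) * Aq k j)]
      simp [Finset.sum_ite_eq]
  have hBtri : B.det = ∏ i, B i i := by
    apply Matrix.det_of_lowerTriangular
    intro i j hij
    have hij' : i < j := hij
    rw [hBe]
    by_cases hi : i = 0
    · rw [if_pos hi, if_neg (by rintro rfl; subst hi; exact lt_irrefl _ hij')]
    · rw [if_neg hi, hAqe, if_neg hi, if_neg (by rintro rfl; exact absurd hij' (by simp [Fin.pos_iff_ne_zero.2 hi])), if_neg hij'.ne]
  have hprod : ∏ i, B i i = (n : ℚ)/2 * (-2) ^ n := by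
    rw [Fin.prod_univ_succ]
    rw [hBe 0 0, if_pos rfl, if_pos rfl]
    congr 1
    rw [Finset.prod_congr rfl (fun k _ => by
      rw [hBe, hAqe]
      simp [Fin.succ_ne_zero k] : ∀ k ∈ (Finset.univ : Finset (Fin n)),
        B k.succ k.succ = (-2 : ℚ))]
    rw [Finset.prod_const, Finset.card_univ]
    simp
  have hdetAq : Aq.det = (n : ℚ)/2 * (-2) ^ n := by
    have : B.det = L.det * Aq.det := Matrix.det_mul _ _
    rw [hBtri, hprod] at this
    rw [hLdet, one_mul] at this
    exact this.symm
  have hcast : (A.det : ℚ) = Aq.det := by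
    have := RingHom.map_det (Int.castRingHom ℚ) A
    rw [hAq]
    simpa using this
  have : ((((-1) ^ n * n * 2 ^ (n - 1) : ℤ)) : ℚ) = (n : ℚ)/2 * (-2) ^ n := by
    obtain ⟨m, rfl⟩ : ∃ m, n = m + 1 := ⟨n - 1, by omega⟩
    push_cast
    rw [neg_pow (2 : ℚ)]
    simp [pow_succ]
    ring
  have hfin : (A.det : ℚ) = (((-1) ^ n * n * 2 ^ (n - 1) : ℤ) : ℚ) := by
    rw [hcast, hdetAq, this]
  exact_mod_cast hfin

end GPaux

/-- For any tree `T` on `n+1` vertices (`n ≥ 1`),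
`det(D(T)) = (-1)^n * n * 2^(n-1)` (Graham--Pollak). -/
theorem det_distMatrix_tree (n : ℕ) (hn : 1 ≤ n) (T : SimpleGraph (Fin (n + 1)))
    (hT : T.IsTree) :
    (distMatrix T).det = (-1) ^ n * n * 2 ^ (n - 1) := by
  classical
  have hconn := hT.isConnected
  have hpar : ∀ v : Fin (n+1), v ≠ 0 → ∃ u, T.Adj v u ∧ T.dist 0 u + 1 = T.dist 0 v :=
    fun v hv => GPaux.exists_parent hconn hv
  set p : Fin (n+1) → Fin (n+1) := fun v => if h : v = 0 then 0 else (hpar v h).choose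
    with hpdef
  have hp1 : ∀ v, v ≠ (0 : Fin (n+1)) → T.Adj v (p v) := by
    intro v hv
    rw [hpdef]
    simp only [dif_neg hv]
    exact (hpar v hv).choose_spec.1
  have hp2 : ∀ v, v ≠ (0 : Fin (n+1)) → T.dist 0 (p v) + 1 = T.dist 0 v := by
    intro v hv
    rw [hpdef]
    simp only [dif_neg hv]
    exact (hpar v hv).choose_spec.2
  set D := distMatrix T with hD
  have hDe : ∀ i j, D i j = (T.dist i j : ℤ) := fun i j => rfl
  set E : Matrix (Fin (n+1)) (Fin (n+1)) ℤ :=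
    Matrix.of (fun i j => if i ≠ 0 ∧ j = p i then 1 else 0) with hE
  have hU : (1 - E).det = 1 := by
    apply GPaux.det_eq_one_of_wt (fun i => T.dist 0 i)
    intro i j hw
    rw [Matrix.sub_apply, Matrix.one_apply, hE]
    simp only [Matrix.of_apply]
    have hneg : ¬(i ≠ 0 ∧ j = p i) := by
      rintro ⟨hi0, rfl⟩
      have := hp2 i hi0
      omega
    rw [if_neg hneg, sub_zero]
  have hED : ∀ i k, (E * D) i k = if i = 0 then 0 else D (p i) k := by
    intro i k
    rw [Matrix.mul_apply]
    by_cases hi : i = 0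
    · simp [hE, hi]
    · rw [if_neg hi]
      rw [Finset.sum_congr rfl (fun l _ => by
        rw [hE]
        simp [hi, ite_mul] : ∀ l ∈ Finset.univ,
          E i l * D l k = if l = p i then D l k else 0)]
      simp [Finset.sum_ite_eq']
  have hDEt : ∀ i j, (D * Eᵀ) i j = if j = 0 then 0 else D i (p j) := by
    intro i j
    rw [Matrix.mul_apply]
    by_cases hj : j = 0
    · simp [hE, hj]
    · rw [if_neg hj]
      rw [Finset.sum_congr rfl (fun l _ => by
        rw [Matrix.transpose_apply, hE]
        simp [hj, mul_ite] : ∀ l ∈ Finset.univ,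
          D i l * Eᵀ l j = if l = p j then D i l else 0)]
      simp [Finset.sum_ite_eq']
  have hEDEt : ∀ i j, ((E * D) * Eᵀ) i j = if i = 0 ∨ j = 0 then 0 else D (p i) (p j) := by
    intro i j
    rw [Matrix.mul_apply]
    by_cases hi : i = 0
    · simp only [hi, true_or, if_pos]
      refine Finset.sum_eq_zero fun l _ => ?_
      rw [hED, if_pos rfl, zero_mul]
    · by_cases hj : j = 0
      · simp only [hj, or_true, if_pos]
        refine Finset.sum_eq_zero fun l _ => ?_
        rw [Matrix.transpose_apply, hE]
        simp [hj]
      · rw [if_neg (by simp [hi, hj])]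
        rw [Finset.sum_congr rfl (fun l _ => by
          rw [hED, if_neg hi, Matrix.transpose_apply, hE]
          simp [hj, mul_ite] : ∀ l ∈ Finset.univ,
            (E * D) i l * Eᵀ l j = if l = p j then D (p i) l else 0)]
        simp [Finset.sum_ite_eq']
  set A : Matrix (Fin (n+1)) (Fin (n+1)) ℤ :=
    Matrix.of (fun i j => if i = 0 then (if j = 0 then 0 else 1)
      else if j = 0 then 1 else if i = j then -2 else 0) with hA
  have hexp : (1 - E) * D * (1 - E)ᵀ = D - E * D - (D * Eᵀ - (E * D) * Eᵀ) := by
    rw [Matrix.transpose_sub, Matrix.transpose_one]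
    noncomm_ring
  have hMA : (1 - E) * D * (1 - E)ᵀ = A := by
    ext i j
    rw [hexp]
    simp only [Matrix.sub_apply]
    rw [hED, hDEt, hEDEt, hA]
    simp only [Matrix.of_apply]
    by_cases hi : i = 0 <;> by_cases hj : j = 0
    · subst hi; subst hj
      simp [hDe, SimpleGraph.dist_self]
    · subst hi
      have h2 := hp2 j hj
      simp only [if_pos rfl, if_neg hj, true_or, if_pos, sub_zero, zero_sub, sub_neg_eq_add]
      rw [hDe, hDe]
      omega
    · subst hj
      have h2 := hp2 i hi
      have c1 : T.dist i 0 = T.dist 0 i := SimpleGraph.dist_comm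
      have c2 : T.dist (p i) 0 = T.dist 0 (p i) := SimpleGraph.dist_comm
      simp only [if_neg hi, if_pos rfl, or_true, if_pos]
      rw [hDe, hDe]
      omega
    · by_cases hij : i = j
      · subst hij
        have hadj := hp1 i hi
        have d1 : T.dist i (p i) = 1 := SimpleGraph.dist_eq_one_iff_adj.2 hadj
        have d2 : T.dist (p i) i = 1 := SimpleGraph.dist_eq_one_iff_adj.2 hadj.symm
        simp only [if_neg hi, if_pos rfl]
        rw [if_neg (by simp [hi])]
        simp only [hDe]
        rw [SimpleGraph.dist_self, SimpleGraph.dist_self, d1, d2]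
        norm_num
      · have h4 := GPaux.four_point hT hp1 hp2 hi hj hij
        simp only [if_neg hi, if_neg hj, if_neg hij]
        rw [if_neg (by simp [hi, hj])]
        simp only [hDe]
        omega
  have hADet : A.det = (-1) ^ n * n * 2 ^ (n - 1) := by
    apply GPaux.det_A n hn
    intro i j
    rw [hA]
    simp only [Matrix.of_apply]
  have h1 : ((1 - E) * D * (1 - E)ᵀ).det = A.det := by rw [hMA]
  rw [Matrix.det_mul, Matrix.det_mul, Matrix.det_transpose, hU, one_mul, mul_one] at h1
  rw [← hD] at *
  rw [h1, hADet]
end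

section
/- Complete graphs are determined by the Smith normal form of the distance Laplacian matrix: if G is a connected graph on n vertices whose distance Laplacian matrix D^L(G) is equivalent over ℤ to the distance Laplacian matrix D^L(K_n) of the complete graph K_n, then G is isomorphic to K_n. -/
open Matrix MvPolynomial

variable {V : Type*}

/-!
Write `D^L(K_n) = n I - J` with `J = 𝟙 𝟙ᵀ` of rank one: a matrix `U (n I - J) W` is congruent
modulo `n` to the rank-one matrix `-(U 𝟙)(𝟙ᵀ W)`, so all its `2 × 2` minors are divisible by `n`.
If `G ≠ K_n`, take `u, v` at distance 2 with a common neighbour `w`. The minors of `D^L(G)` on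
rows `u, w` give `n ∣ 2 tr(w) + 1` and, as `|d(u, z) - d(w, z)| ≤ 1`, `d(w, z) ∈ {1, n - 1}` for
every `z ≠ w`. If all these distances are `1`, then `tr(w) = n - 1` and `n ∣ 2n - 1`, impossible
for `n ≥ 2`. Otherwise a geodesic of length `n - 1` starts at `w`, so the distances from `w` are
pairwise distinct, contradicting `d(w, u) = d(w, v) = 1`.
-/

namespace SimpleGraph

variable {G : SimpleGraph V} {u v w : V}

lemma Walk.dist_getVert_of_length_eq_dist {p : G.Walk u v} (hp : p.length = G.dist u v) {k : ℕ}
    (hk : k ≤ p.length) : G.dist u (p.getVert k) = k := by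
  rw [← length_eq_dist_of_subwalk hp (p.isSubwalk_take k), Walk.take_length]
  omega

lemma Connected.dist_lt_card [Fintype V] (hG : G.Connected) (u v : V) :
    G.dist u v < Fintype.card V := by
  obtain ⟨p, hpath, hp⟩ := hG.exists_path_of_dist u v
  exact hp ▸ hpath.length_lt

/-- A geodesic of length `|V| - 1` from `w` passes through every vertex, at distinct
distances from `w`. -/
lemma Connected.dist_injective_of_dist_eq_card_sub_one [Fintype V] (hG : G.Connected) {z : V}
    (hz : G.dist w z = Fintype.card V - 1) : Function.Injective (G.dist w) := by
  obtain ⟨p, hp⟩ := hG.exists_walk_length_eq_dist w z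
  have hpos := Fintype.card_pos_iff.mpr ⟨w⟩
  let f : Fin (Fintype.card V) → V := fun k => p.getVert k
  have hdist (k : Fin (Fintype.card V)) : G.dist w (f k) = k :=
    Walk.dist_getVert_of_length_eq_dist hp (by omega)
  have hf : Function.Bijective f := by
    rw [Fintype.bijective_iff_injective_and_card]
    exact ⟨fun a b hab => Fin.ext (by rw [← hdist a, ← hdist b, hab]), Fintype.card_fin _⟩
  intro x y hxy
  obtain ⟨a, rfl⟩ := hf.2 x
  obtain ⟨b, rfl⟩ := hf.2 y
  rw [hdist, hdist] at hxy
  rw [Fin.ext hxy]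

lemma Connected.exists_adj_adj_dist_eq_two (hG : G.Connected) (hne : G ≠ ⊤) :
    ∃ u w v, G.Adj u w ∧ G.Adj w v ∧ G.dist u v = 2 := by
  obtain ⟨a, b, hab, hnadj⟩ : ∃ a b, a ≠ b ∧ ¬G.Adj a b := by
    by_contra! h
    exact hne (eq_top_iff.mpr fun a b hab => h a b hab.ne)
  obtain ⟨p, hp⟩ := hG.exists_walk_length_eq_dist a b
  obtain ⟨u, w, v, huw, hwv, hnuv, huv⟩ :=
    p.exists_adj_adj_not_adj_ne hp (hG.one_lt_dist_of_ne_of_not_adj hab hnadj)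
  refine ⟨u, w, v, huw, hwv, le_antisymm ?_ (hG.one_lt_dist_of_ne_of_not_adj huv hnuv)⟩
  simpa using dist_le (huw.toWalk.append hwv.toWalk)

end SimpleGraph

open SimpleGraph

section DistLaplacian

variable [Fintype V] [DecidableEq V] {G : SimpleGraph V}

lemma distLaplacian_apply_self (u : V) : distLaplacian G u u = transmission G u := by
  simp [distLaplacian, distMatrix]

lemma distLaplacian_apply_of_ne {u v : V} (h : u ≠ v) : distLaplacian G u v = -G.dist u v := by
  simp [distLaplacian, distMatrix, h]

lemma transmission_eq_card_sub_one {w : V} (h : ∀ z, z ≠ w → G.dist w z = 1) :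
    transmission G w = Fintype.card V - 1 := by
  have hdist : ∀ z, (G.dist w z : ℤ) = if z = w then 0 else 1 := by
    intro z; split_ifs with hz <;> simp [hz, h]
  have hpos : 1 ≤ Fintype.card V := Fintype.card_pos_iff.mpr ⟨w⟩
  simp [transmission, hdist, Finset.sum_ite, Finset.filter_ne', Nat.cast_sub hpos]

lemma distLaplacian_top :
    distLaplacian (⊤ : SimpleGraph V) = (Fintype.card V : ℤ) • 1 - vecMulVec 1 1 := by
  ext i j
  by_cases hij : i = j
  · subst hij
    rw [distLaplacian_apply_self, transmission_eq_card_sub_one fun z hz => by simp [Ne.symm hz]]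
    simp only [Matrix.sub_apply, Matrix.smul_apply, one_apply_eq, vecMulVec_apply]
    simp
  · simp only [distLaplacian_apply_of_ne hij, Matrix.sub_apply, Matrix.smul_apply,
      one_apply_ne hij, vecMulVec_apply]
    simp [hij]

end DistLaplacian

lemma dvd_mul_sub_mul_of_eq_smul_sub_vecMulVec {R m n : Type*} [CommRing R] {M A : Matrix m n R}
    {c : R} {x : m → R} {y : n → R} (h : M = c • A - vecMulVec x y) (i j : m) (k l : n) :
    c ∣ M i k * M j l - M i l * M j k := by
  subst h
  simp only [Matrix.sub_apply, Matrix.smul_apply, vecMulVec_apply, smul_eq_mul]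
  exact Dvd.intro (c * (A i k * A j l - A i l * A j k) - A i k * x j * y l - x i * y k * A j l
    + A i l * x j * y k + x i * y l * A j k) (by ring)

lemma MatEquivZ.card_dvd_mul_sub_mul_of_distLaplacian_top [Fintype V] [DecidableEq V]
    {M : Matrix V V ℤ} (h : MatEquivZ M (distLaplacian (⊤ : SimpleGraph V))) (i j k l : V) :
    (Fintype.card V : ℤ) ∣ M i k * M j l - M i l * M j k := by
  obtain ⟨U, W, -, -, rfl⟩ := h
  refine dvd_mul_sub_mul_of_eq_smul_sub_vecMulVec (A := U * W) (x := U *ᵥ 1) (y := 1 ᵥ* W) ?_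
    i j k l
  rw [distLaplacian_top, Matrix.mul_sub, Matrix.sub_mul, Matrix.mul_smul, Matrix.smul_mul,
    Matrix.mul_one, Matrix.mul_vecMulVec, Matrix.vecMulVec_mul]

lemma Int.eq_zero_or_eq_of_dvd {n t : ℤ} (h : n ∣ t) (h0 : 0 ≤ t) (h2n : t < 2 * n) :
    t = 0 ∨ t = n := by
  obtain ⟨k, rfl⟩ := h
  have hn : 0 < n := by nlinarith
  have hk0 : 0 ≤ k := by nlinarith
  have hk1 : k < 2 := by nlinarith
  interval_cases k <;> simp

section DistLaplacianMinors

variable [Fintype V] [DecidableEq V] {G : SimpleGraph V}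
  (hdvd : ∀ i j k l, (Fintype.card V : ℤ) ∣
    distLaplacian G i k * distLaplacian G j l - distLaplacian G i l * distLaplacian G j k)
  {u w v : V} (huw : G.Adj u w) (hwv : G.Adj w v) (huv : G.dist u v = 2)
include hdvd huw hwv huv

lemma card_dvd_one_add_two_mul_transmission :
    (Fintype.card V : ℤ) ∣ 1 + 2 * transmission G w := by
  have hne : u ≠ v := by rintro rfl; simp at huv
  have := hdvd u w w v
  rw [distLaplacian_apply_of_ne huw.ne, distLaplacian_apply_of_ne hwv.ne,
    distLaplacian_apply_of_ne hne, distLaplacian_apply_self, huv,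
    dist_eq_one_iff_adj.mpr huw, dist_eq_one_iff_adj.mpr hwv] at this
  convert this using 1
  push_cast
  ring

lemma SimpleGraph.Connected.dist_eq_one_or_eq_card_sub_one (hG : G.Connected) {z : V}
    (hzw : z ≠ w) :
    G.dist w z = 1 ∨ G.dist w z = Fintype.card V - 1 := by
  by_cases hzu : z = u
  · subst hzu
    exact .inl (dist_eq_one_iff_adj.mpr huw.symm)
  have hne : u ≠ v := by rintro rfl; simp at huv
  have := hdvd u w v z
  rw [distLaplacian_apply_of_ne hne, distLaplacian_apply_of_ne hwv.ne,
    distLaplacian_apply_of_ne (Ne.symm hzw), distLaplacian_apply_of_ne (Ne.symm hzu), huv,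
    dist_eq_one_iff_adj.mpr hwv] at this
  have hwz := hG.pos_dist_of_ne (Ne.symm hzw)
  have hlt := hG.dist_lt_card w z
  have hclose := huw.diff_dist_adj (u := z)
  rw [dist_comm (u := z), dist_comm (u := z)] at hclose
  rcases Int.eq_zero_or_eq_of_dvd (t := 2 * G.dist w z - G.dist u z)
    (by convert this using 1; push_cast; ring) (by omega) (by omega) with h | h <;> omega

end DistLaplacianMinors

theorem SimpleGraph.Connected.eq_top_of_matEquivZ_distLaplacian_top [Fintype V] [DecidableEq V]
    {G : SimpleGraph V} (hG : G.Connected)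
    (h : MatEquivZ (distLaplacian G) (distLaplacian (⊤ : SimpleGraph V))) : G = ⊤ := by
  by_contra hne
  obtain ⟨u, w, v, huw, hwv, huv⟩ := hG.exists_adj_adj_dist_eq_two hne
  have hdvd := h.card_dvd_mul_sub_mul_of_distLaplacian_top
  by_cases hall : ∀ z, z ≠ w → G.dist w z = 1
  · have htr := card_dvd_one_add_two_mul_transmission hdvd huw hwv huv
    rw [transmission_eq_card_sub_one hall] at htr
    have hone : (Fintype.card V : ℤ) ∣ 1 := by
      have := dvd_sub (dvd_mul_right (Fintype.card V : ℤ) 2) htr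
      rwa [show (Fintype.card V : ℤ) * 2 - (1 + 2 * (Fintype.card V - 1)) = 1 by ring] at this
    have hcard := Fintype.one_lt_card_iff.mpr ⟨u, w, huw.ne⟩
    have := Int.le_of_dvd one_pos hone
    omega
  · push Not at hall
    obtain ⟨z, hzw, hz⟩ := hall
    have hinj := hG.dist_injective_of_dist_eq_card_sub_one
      ((hG.dist_eq_one_or_eq_card_sub_one hdvd huw hwv huv hzw).resolve_left hz)
    have hvu : u = v := hinj (by rw [dist_comm, dist_eq_one_iff_adj.mpr huw,
      dist_eq_one_iff_adj.mpr hwv])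
    simp [hvu] at huv

/-- Complete graphs are determined by the SNF of the distance Laplacian
matrix: if `G` is a connected graph on `n` vertices whose distance Laplacian matrix is
equivalent over `ℤ` to that of the complete graph `K_n`, then `G` is isomorphic to
`K_n`. -/
theorem completeGraph_determined_by_snf_distLaplacian (n : ℕ) (G : SimpleGraph (Fin n))
    (hG : G.Connected)
    (h : MatEquivZ (distLaplacian G) (distLaplacian (⊤ : SimpleGraph (Fin n)))) :
    Nonempty (G ≃g (⊤ : SimpleGraph (Fin n))) := by
  obtain rfl := hG.eq_top_of_matEquivZ_distLaplacian_top h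
  exact ⟨.refl⟩
end

section
/- For the complete graph K_n on vertex set [n] with variables x_1,…,x_n, the k-th distance ideal I_k(K_n, X) ⊆ ℤ[x_1,…,x_n] is: for k < n, the ideal generated by the set of polynomials { ∏_{j∈I}(x_j − 1) : I ⊆ [n], |I| = k−1 }, and for k = n, the principal ideal generated by ∏_{j=1}^n (x_j − 1) + Σ_{i=1}^n ∏_{j≠i} (x_j − 1). -/
open Matrix MvPolynomial

variable {V : Type*}

/-!
Write `D(K_n, X) = diag(y) + J` with `y_j = x_j - 1` and `J` the all-ones matrix. The matrix
determinant lemma gives `det (A + J) = det A + ∑ᵢⱼ adj(A)ᵢⱼ`, and both `det A` (by Laplace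
expansion) and the entries of `adj A` are combinations of `(k-1)`-minors of `A`; so every
`k`-minor of `A + J` lies in the ideal of `(k-1)`-minors of `A`. For `A = diag(y)` these minors
are, up to sign, products of `y_j` over `(k-1)`-subsets. Conversely, when `|s| = k - 1 < n - 1`,
pick `a ≠ b` outside `s`: the minor of `diag(y) + J` on rows `s ∪ {a}` and columns `s ∪ {b}` is
exactly `∏_{j ∈ s} y_j`. For `k = n` every `n`-minor is `± det`, and the same lemma evaluates
the determinant.
-/

namespace Matrix
variable {n R : Type*} [Fintype n] [DecidableEq n] [CommRing R]

theorem det_add_vecMulVec_of_isUnit {A : Matrix n n R} (hA : IsUnit A.det) (u v : n → R) :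
    (A + vecMulVec u v).det = A.det + v ⬝ᵥ (adjugate A *ᵥ u) := by
  rw [vecMulVec_eq Unit, det_add_replicateCol_mul_replicateRow hA, det_unique (n := Unit),
    add_apply, one_apply_eq, Matrix.mul_assoc, ← replicateCol_mulVec,
    replicateRow_mul_replicateCol_apply, nonsing_inv_apply _ hA, smul_mulVec, dotProduct_smul,
    smul_eq_mul, mul_add, mul_one, ← mul_assoc, IsUnit.mul_val_inv, one_mul]

theorem _root_.RingHom.map_det_add_vecMulVec_sub {S : Type*} [CommRing S] (f : R →+* S)
    (A : Matrix n n R) (u v : n → R) :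
    f ((A + vecMulVec u v).det - (A.det + v ⬝ᵥ (adjugate A *ᵥ u))) =
      (f.mapMatrix A + vecMulVec (f ∘ u) (f ∘ v)).det -
        ((f.mapMatrix A).det + (f ∘ v) ⬝ᵥ (adjugate (f.mapMatrix A) *ᵥ (f ∘ u))) := by
  simp only [map_sub, map_add, RingHom.map_det, RingHom.map_dotProduct, ← RingHom.map_adjugate]
  congr
  · ext i j; simp [vecMulVec_apply]
  · ext i; exact RingHom.map_mulVec ..

theorem det_add_vecMulVec (A : Matrix n n R) (u v : n → R) :
    (A + vecMulVec u v).det = A.det + v ⬝ᵥ (adjugate A *ᵥ u) := by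
  -- Generic `A`, `u`, `v` over `ℤ`: there `det A` is nonzero, so a unit in the fraction field.
  let S := MvPolynomial ((n × n) ⊕ n ⊕ n) ℤ
  let A' : Matrix n n S := (mvPolynomialX n n ℤ).map (rename Sum.inl)
  let u' : n → S := fun i => X (.inr (.inl i))
  let v' : n → S := fun i => X (.inr (.inr i))
  have huniv : (A' + vecMulVec u' v').det - (A'.det + v' ⬝ᵥ (adjugate A' *ᵥ u')) = 0 := by
    let g := algebraMap S (FractionRing S)
    have hg : Function.Injective g := IsFractionRing.injective S (FractionRing S)
    have hdet : IsUnit (g.mapMatrix A').det := by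
      rw [← RingHom.map_det, isUnit_iff_ne_zero, map_ne_zero_iff _ hg,
        show A'.det = rename Sum.inl (mvPolynomialX n n ℤ).det from (AlgHom.map_det _ _).symm]
      exact (map_ne_zero_iff _ (rename_injective _ Sum.inl_injective)).mpr
        (det_mvPolynomialX_ne_zero n ℤ)
    apply hg
    rw [RingHom.map_det_add_vecMulVec_sub, det_add_vecMulVec_of_isUnit hdet, sub_self, map_zero]
  let f : S →+* R :=
    eval₂Hom (Int.castRingHom R) (Sum.elim (fun p => A p.1 p.2) (Sum.elim u v))
  have h := f.map_det_add_vecMulVec_sub A' u' v'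
  have hA : f.mapMatrix A' = A := by
    ext i j
    simp only [A', RingHom.mapMatrix_apply, map_apply, mvPolynomialX_apply, rename_X]
    exact eval₂_X ..
  have hu : f ∘ u' = u := by funext; exact eval₂_X ..
  have hv : f ∘ v' = v := by funext; exact eval₂_X ..
  rw [huniv, map_zero, hA, hu, hv] at h
  exact sub_eq_zero.mp h.symm

theorem det_add_ones (A : Matrix n n R) :
    (A + of fun _ _ => 1).det = A.det + ∑ i, ∑ j, adjugate A i j := by
  rw [show (of fun _ _ => 1 : Matrix n n R) = vecMulVec 1 1 by ext; simp [vecMulVec_apply],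
    det_add_vecMulVec]
  simp [dotProduct, mulVec]

theorem det_diagonal_add_ones (d : n → R) :
    (diagonal d + of fun _ _ => 1).det = ∏ i, d i + ∑ i, ∏ j ∈ Finset.univ.erase i, d j := by
  rw [det_add_ones, det_diagonal, adjugate_diagonal]
  simp [diagonal_apply]

theorem det_diagonal_cons_zero_add_ones {m : ℕ} (d : Fin m → R) :
    (diagonal (Fin.cons 0 d : Fin (m + 1) → R) + of fun _ _ => 1).det = ∏ i, d i := by
  have hsucc (i : Fin m) :
      ∏ j ∈ Finset.univ.erase i.succ, (Fin.cons 0 d : Fin (m + 1) → R) j = 0 :=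
    Finset.prod_eq_zero (Finset.mem_erase.2 ⟨(Fin.succ_ne_zero i).symm, Finset.mem_univ 0⟩) rfl
  rw [det_diagonal_add_ones, Fin.prod_univ_succ, Fin.sum_univ_succ]
  simp only [hsucc, Fin.cons_zero, zero_mul, zero_add, Finset.sum_const_zero, add_zero]
  rw [Fin.univ_succ, Finset.erase_cons, Finset.prod_map]
  simp

theorem det_submatrix_eq_zero_of_not_injective_left {l : Type*} (A : Matrix l l R) {p : n → l}
    (hp : ¬ p.Injective) (q : n → l) : (A.submatrix p q).det = 0 := by
  obtain ⟨i, j, hij, hne⟩ := Function.not_injective_iff.mp hp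
  exact det_zero_of_row_eq hne (funext fun _ => by simp [hij])

theorem det_submatrix_eq_zero_of_not_injective_right {l : Type*} (A : Matrix l l R) (p : n → l)
    {q : n → l} (hq : ¬ q.Injective) : (A.submatrix p q).det = 0 := by
  obtain ⟨i, j, hij, hne⟩ := Function.not_injective_iff.mp hq
  exact det_zero_of_column_eq hne (by simp [hij])

theorem det_submatrix_equiv {m : Type*} [Fintype m] [DecidableEq m] (A : Matrix n n R)
    (e f : m ≃ n) :
    (A.submatrix e f).det = Equiv.Perm.sign (e.trans f.symm) * A.det := by
  rw [← det_submatrix_equiv_self f A, ← det_permute]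
  congr 1
  ext i j
  simp

end Matrix

section minorsIdeal

variable {R : Type*} [CommRing R] [Fintype V]

theorem minorsIdeal_submatrix_le (A : Matrix V V R) {k : ℕ} (p q : Fin k → V) (m : ℕ) :
    minorsIdeal (A.submatrix p q) m ≤ minorsIdeal A m := by
  rw [minorsIdeal, Ideal.span_le]
  rintro _ ⟨⟨p', q'⟩, rfl⟩
  exact Ideal.subset_span ⟨(p ∘ p', q ∘ q'), rfl⟩

theorem det_mem_minorsIdeal {m : ℕ} (A : Matrix (Fin (m + 1)) (Fin (m + 1)) R) :
    A.det ∈ minorsIdeal A m := by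
  rw [det_succ_row_zero]
  exact Ideal.sum_mem _ fun j _ => Ideal.mul_mem_left _ _ (Ideal.subset_span ⟨(_, _), rfl⟩)

theorem adjugate_apply_mem_minorsIdeal {m : ℕ} (A : Matrix (Fin (m + 1)) (Fin (m + 1)) R)
    (i j : Fin (m + 1)) : adjugate A i j ∈ minorsIdeal A m := by
  rw [adjugate_fin_succ_eq_det_submatrix]
  exact Ideal.mul_mem_left _ _ (Ideal.subset_span ⟨(_, _), rfl⟩)

theorem det_add_ones_mem_minorsIdeal {m : ℕ} (A : Matrix (Fin (m + 1)) (Fin (m + 1)) R) :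
    (A + of fun _ _ => 1).det ∈ minorsIdeal A m := by
  rw [det_add_ones]
  exact Ideal.add_mem _ (det_mem_minorsIdeal A) <|
    Ideal.sum_mem _ fun i _ => Ideal.sum_mem _ fun j _ => adjugate_apply_mem_minorsIdeal A i j

theorem minorsIdeal_add_ones_le (A : Matrix V V R) (m : ℕ) :
    minorsIdeal (A + of fun _ _ => 1) (m + 1) ≤ minorsIdeal A m := by
  rw [minorsIdeal, Ideal.span_le]
  rintro _ ⟨⟨p, q⟩, rfl⟩
  exact minorsIdeal_submatrix_le A p q m (det_add_ones_mem_minorsIdeal (A.submatrix p q))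

theorem minorsIdeal_diagonal_le [DecidableEq V] (y : V → R) (m : ℕ) :
    minorsIdeal (diagonal y) m ≤
      Ideal.span {p | ∃ s : Finset V, s.card = m ∧ p = ∏ j ∈ s, y j} := by
  rw [minorsIdeal, Ideal.span_le]
  rintro _ ⟨⟨p, q⟩, rfl⟩
  by_cases hq : q.Injective
  swap
  · simp [det_submatrix_eq_zero_of_not_injective_right _ _ hq]
  simp only [SetLike.mem_coe, det_apply']
  refine Ideal.sum_mem _ fun σ _ => Ideal.mul_mem_left _ _ ?_
  by_cases hσ : ∀ i, p (σ i) = q i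
  · refine Ideal.subset_span ⟨Finset.univ.map ⟨q, hq⟩, by simp, ?_⟩
    simp [Finset.prod_map, hσ]
  · push Not at hσ
    obtain ⟨i, hi⟩ := hσ
    rw [Finset.prod_eq_zero (Finset.mem_univ i) (by simp [hi])]
    exact Ideal.zero_mem _

theorem minorsIdeal_card [DecidableEq V] (A : Matrix V V R) :
    minorsIdeal A (Fintype.card V) = Ideal.span {A.det} := by
  apply le_antisymm
  · rw [minorsIdeal, Ideal.span_le]
    rintro _ ⟨⟨p, q⟩, rfl⟩
    by_cases hp : p.Injective
    swap
    · simp [det_submatrix_eq_zero_of_not_injective_left _ hp]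
    by_cases hq : q.Injective
    swap
    · simp [det_submatrix_eq_zero_of_not_injective_right _ _ hq]
    have hbij {f : Fin (Fintype.card V) → V} (hf : f.Injective) : f.Bijective :=
      (Fintype.bijective_iff_injective_and_card f).mpr ⟨hf, Fintype.card_fin _⟩
    simp only [SetLike.mem_coe]
    rw [show A.submatrix p q = A.submatrix (Equiv.ofBijective p (hbij hp))
      (Equiv.ofBijective q (hbij hq)) from rfl, det_submatrix_equiv]
    exact Ideal.mul_mem_left _ _ (Ideal.mem_span_singleton_self _)
  · rw [Ideal.span_le, Set.singleton_subset_iff]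
    let e := (Fintype.equivFin V).symm
    exact Ideal.subset_span ⟨(e, e), det_submatrix_equiv_self e A⟩

theorem prod_mem_minorsIdeal_diagonal_add_ones [DecidableEq V] (y : V → R) {s : Finset V}
    {a b : V} (ha : a ∉ s) (hb : b ∉ s) (hab : a ≠ b) :
    ∏ j ∈ s, y j ∈ minorsIdeal (diagonal y + of fun _ _ => 1) (s.card + 1) := by
  let e : Fin s.card → V := fun i => s.equivFin.symm i
  have he_inj : e.Injective := Subtype.val_injective.comp s.equivFin.symm.injective
  have hae (i : Fin s.card) : a ≠ e i := fun h => ha (h ▸ (s.equivFin.symm i).2)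
  have hbe (i : Fin s.card) : e i ≠ b := fun h => hb (h ▸ (s.equivFin.symm i).2)
  have hsub : (diagonal y + of fun _ _ => 1).submatrix (Fin.cons a e) (Fin.cons b e) =
      diagonal (Fin.cons 0 (y ∘ e)) + of fun _ _ => 1 := by
    ext i j
    refine Fin.cases ?_ (fun i => ?_) i <;> refine Fin.cases ?_ (fun j => ?_) j <;>
      simp [diagonal_apply, hab, hae, hbe, he_inj.eq_iff]
  have hdet : ∏ j ∈ s, y j =
      ((diagonal y + of fun _ _ => 1).submatrix (Fin.cons a e) (Fin.cons b e)).det := by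
    rw [hsub, det_diagonal_cons_zero_add_ones, ← s.prod_coe_sort]
    exact (Equiv.prod_comp s.equivFin.symm _).symm
  rw [hdet]
  exact Ideal.subset_span ⟨(_, _), rfl⟩

end minorsIdeal

theorem genDistMatrix_top [Fintype V] [DecidableEq V] :
    genDistMatrix (⊤ : SimpleGraph V) = diagonal (fun i => X i - 1) + of fun _ _ => 1 := by
  ext i j
  by_cases h : i = j
  · subst h
    simp [genDistMatrix, distMatrix]
  · simp [genDistMatrix, distMatrix, h, SimpleGraph.dist_top_of_ne h]

theorem distIdeal_completeGraph_general (n k : ℕ) (hk1 : 1 ≤ k) :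
    (k < n →
      distIdeal (⊤ : SimpleGraph (Fin n)) k =
        Ideal.span {p : MvPolynomial (Fin n) ℤ |
          ∃ s : Finset (Fin n), s.card = k - 1 ∧
            p = ∏ j ∈ s, (MvPolynomial.X j - 1)}) ∧
    (k = n →
      distIdeal (⊤ : SimpleGraph (Fin n)) k =
        Ideal.span {(∏ j : Fin n, (MvPolynomial.X j - 1)) +
          ∑ i : Fin n, ∏ j ∈ Finset.univ.erase i, (MvPolynomial.X j - 1)}) := by
  rw [distIdeal, genDistMatrix_top]
  refine ⟨fun hlt => ?_, fun hn => ?_⟩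
  · obtain ⟨m, rfl⟩ := Nat.exists_eq_add_of_le' hk1
    refine le_antisymm ((minorsIdeal_add_ones_le _ m).trans (minorsIdeal_diagonal_le _ m)) ?_
    rw [Ideal.span_le]
    rintro _ ⟨s, hs, rfl⟩
    have hcompl : 1 < sᶜ.card := by
      rw [Finset.card_compl, hs, Fintype.card_fin]
      omega
    obtain ⟨a, ha, b, hb, hab⟩ := Finset.one_lt_card.mp hcompl
    rw [Finset.mem_compl] at ha hb
    simpa [hs] using prod_mem_minorsIdeal_diagonal_add_ones (fun j => X j - 1) ha hb hab
  · subst hn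
    have h := minorsIdeal_card (diagonal (fun i : Fin k => (X i - 1 : MvPolynomial (Fin k) ℤ)) +
      of fun _ _ => 1)
    rwa [Fintype.card_fin, det_diagonal_add_ones] at h

/-- The distance ideals of the complete graph `K_n`: for `1 ≤ k ≤ n`,
if `k < n` then `I_k(K_n, X)` is generated by the products `∏_{j ∈ I} (x_j - 1)` over
subsets `I` of size `k - 1`, and if `k = n` then `I_k(K_n, X)` is generated by
`∏_{j=1}^n (x_j - 1) + ∑_{i=1}^n ∏_{j ≠ i} (x_j - 1)`. -/
theorem distIdeal_completeGraph (n k : ℕ) (hk1 : 1 ≤ k) (hkn : k ≤ n) :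
    (k < n →
      distIdeal (⊤ : SimpleGraph (Fin n)) k =
        Ideal.span {p : MvPolynomial (Fin n) ℤ |
          ∃ s : Finset (Fin n), s.card = k - 1 ∧
            p = ∏ j ∈ s, (MvPolynomial.X j - 1)}) ∧
    (k = n →
      distIdeal (⊤ : SimpleGraph (Fin n)) k =
        Ideal.span {(∏ j : Fin n, (MvPolynomial.X j - 1)) +
          ∑ i : Fin n, ∏ j ∈ Finset.univ.erase i, (MvPolynomial.X j - 1)}) :=
  distIdeal_completeGraph_general n k hk1
end

section
/- A connected graph G on at least two vertices has exactly one trivial distance ideal over ℤ[X_G] (i.e., I_1(G,X_G) = ⟨1⟩ and I_2(G,X_G) ≠ ⟨1⟩) if and only if G is a complete graph or a complete bipartite graph. -/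
open Matrix MvPolynomial

variable {V : Type*}

section myhelpers
set_option linter.unusedSectionVars false
variable [Fintype V] [DecidableEq V] {G : SimpleGraph V}

lemma gdm_diag (u : V) : genDistMatrix G u u = X u := by
  simp [genDistMatrix, distMatrix, Matrix.diagonal]

lemma gdm_off {u v : V} (h : u ≠ v) :
    genDistMatrix G u v = ((G.dist u v : ℤ) : MvPolynomial V ℤ) := by
  simp [genDistMatrix, distMatrix, Matrix.diagonal, h]

lemma minor_mem (a b c d : V) :
    genDistMatrix G a c * genDistMatrix G b d - genDistMatrix G a d * genDistMatrix G b c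
      ∈ distIdeal G 2 := by
  apply Ideal.subset_span
  refine ⟨(![a, b], ![c, d]), ?_⟩
  simp [Matrix.det_fin_two, Matrix.submatrix]

lemma minor1_mem (u v : V) : genDistMatrix G u v ∈ distIdeal G 1 := by
  apply Ideal.subset_span
  refine ⟨(fun _ => u, fun _ => v), ?_⟩
  simp [Matrix.det_fin_one, Matrix.submatrix]

lemma minor_offdiag_mem {a b c d : V} (h1 : a ≠ c) (h2 : b ≠ d) (h3 : a ≠ d) (h4 : b ≠ c) :
    (((G.dist a c : ℤ) * (G.dist b d : ℤ) - (G.dist a d : ℤ) * (G.dist b c : ℤ) : ℤ) :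
      MvPolynomial V ℤ) ∈ distIdeal G 2 := by
  have := minor_mem (G := G) a b c d
  rw [gdm_off h1, gdm_off h2, gdm_off h3, gdm_off h4] at this
  push_cast at this ⊢
  exact this

lemma rank_one_lemma {R : Type*} [CommRing R] [Nontrivial R]
    (φ : MvPolynomial V ℤ →+* R) (g h : V → R)
    (hgh : ∀ u v, φ (genDistMatrix G u v) = g u * h v) :
    distIdeal G 2 ≠ ⊤ := by
  intro htop
  have h1 : (1 : MvPolynomial V ℤ) ∈ distIdeal G 2 := htop ▸ Submodule.mem_top
  have hsub : distIdeal G 2 ≤ RingHom.ker φ := by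
    rw [distIdeal, minorsIdeal, Ideal.span_le]
    rintro x ⟨p, rfl⟩
    simp only [SetLike.mem_coe, RingHom.mem_ker]
    rw [RingHom.map_det, Matrix.det_fin_two]
    simp only [RingHom.mapMatrix_apply, Matrix.map_apply, Matrix.submatrix_apply, hgh]
    ring
  have := hsub h1
  rw [RingHom.mem_ker, _root_.map_one] at this
  exact one_ne_zero this

lemma dist_getVert_le (hconn : G.Connected) {u v : V} (p : G.Walk u v) (i : ℕ) :
    G.dist u (p.getVert i) ≤ i := by
  induction i with
  | zero => simp
  | succ i ih =>
      by_cases hi : i < p.length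
      · have hadj := p.adj_getVert_succ hi
        calc G.dist u (p.getVert (i + 1))
            ≤ G.dist u (p.getVert i) + G.dist (p.getVert i) (p.getVert (i + 1)) :=
              hconn.dist_triangle
          _ ≤ i + 1 := by
              have : G.dist (p.getVert i) (p.getVert (i + 1)) = 1 :=
                SimpleGraph.dist_eq_one_iff_adj.mpr hadj
              omega
      · have h1 : p.getVert (i + 1) = v := p.getVert_of_length_le (by omega)
        have h2 : p.getVert i = v := p.getVert_of_length_le (by omega)
        rw [h1, ← h2]
        omega

lemma dist_getVert_to_end {u v : V} (p : G.Walk u v) (i : ℕ) :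
    G.dist (p.getVert i) v ≤ p.length - i := by
  induction p generalizing i with
  | nil =>
      rename_i x
      have h0 : (SimpleGraph.Walk.nil : G.Walk x x).getVert i = x :=
        SimpleGraph.Walk.getVert_of_length_le _ (by simp)
      rw [h0]
      simp [SimpleGraph.dist_self]
  | cons h q ih =>
      cases i with
      | zero =>
          simpa using SimpleGraph.dist_le (SimpleGraph.Walk.cons h q)
      | succ i =>
          have := ih i
          simp only [SimpleGraph.Walk.getVert_cons_succ, SimpleGraph.Walk.length_cons]
          omega

end myhelpers

section fwd
set_option linter.unusedSectionVars false
variable [Fintype V] [DecidableEq V] {G : SimpleGraph V}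

lemma diam_le_two (hconn : G.Connected) (hI2 : distIdeal G 2 ≠ ⊤) (u v : V) :
    G.dist u v ≤ 2 := by
  by_contra hd
  push_neg at hd
  obtain ⟨p, hp⟩ := (hconn u v).exists_walk_length_eq_dist
  have hlen : 3 ≤ p.length := by omega
  set a := p.getVert 1 with ha
  set b := p.getVert 2 with hb
  set w := p.getVert 3 with hw
  have hua : G.Adj u a := by
    have := p.adj_getVert_succ (i := 0) (by omega)
    simpa [SimpleGraph.Walk.getVert_zero] using this
  have hab : G.Adj a b := p.adj_getVert_succ (i := 1) (by omega)
  have hbw : G.Adj b w := p.adj_getVert_succ (i := 2) (by omega)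
  have dua : G.dist u a = 1 := SimpleGraph.dist_eq_one_iff_adj.mpr hua
  have dab : G.dist a b = 1 := SimpleGraph.dist_eq_one_iff_adj.mpr hab
  have dbw : G.dist b w = 1 := SimpleGraph.dist_eq_one_iff_adj.mpr hbw
  have dub_le : G.dist u b ≤ 2 := dist_getVert_le hconn p 2
  have duw_le : G.dist u w ≤ 3 := dist_getVert_le hconn p 3
  have dwv : G.dist w v ≤ p.length - 3 := dist_getVert_to_end p 3
  have dbv : G.dist b v ≤ p.length - 2 := dist_getVert_to_end p 2
  have htri_w : G.dist u v ≤ G.dist u w + G.dist w v := hconn.dist_triangle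
  have htri_b : G.dist u v ≤ G.dist u b + G.dist b v := hconn.dist_triangle
  have duw : G.dist u w = 3 := by omega
  have dub : G.dist u b = 2 := by omega
  have daw : G.dist a w = 2 := by
    have h1 : G.dist a w ≤ G.dist a b + G.dist b w := hconn.dist_triangle
    have h2 : G.dist u w ≤ G.dist u a + G.dist a w := hconn.dist_triangle
    omega
  have hub_ne : u ≠ b := by intro h; rw [h, SimpleGraph.dist_self] at dub; omega
  have huw_ne : u ≠ w := by intro h; rw [h, SimpleGraph.dist_self] at duw; omega
  have haw_ne : a ≠ w := by intro h; rw [h, SimpleGraph.dist_self] at daw; omega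
  have hmem := minor_offdiag_mem (G := G) hub_ne haw_ne huw_ne hab.ne
  rw [dub, daw, duw, dab] at hmem
  norm_num at hmem
  exact hI2 ((Ideal.eq_top_iff_one _).mpr hmem)

lemma dist_eq_two_of (hconn : G.Connected) (hI2 : distIdeal G 2 ≠ ⊤) {u v : V}
    (h1 : u ≠ v) (h2 : ¬ G.Adj u v) : G.dist u v = 2 := by
  have hle := diam_le_two hconn hI2 u v
  have hpos := hconn.pos_dist_of_ne h1
  have hne1 : G.dist u v ≠ 1 := fun h => h2 (SimpleGraph.dist_eq_one_iff_adj.mp h)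
  omega

lemma not_adj_trans (hconn : G.Connected) (hI2 : distIdeal G 2 ≠ ⊤) {a b c : V}
    (dab : G.dist a b = 2) (dbc : G.dist b c = 2) (hac_ne : a ≠ c) : ¬ G.Adj a c := by
  intro hac
  obtain ⟨p, hp⟩ := (hconn a b).exists_walk_length_eq_dist
  rw [dab] at hp
  set w := p.getVert 1 with hwdef
  have haw : G.Adj a w := by
    have := p.adj_getVert_succ (i := 0) (by omega)
    simpa [SimpleGraph.Walk.getVert_zero] using this
  have hwb : G.Adj w b := by
    have := p.adj_getVert_succ (i := 1) (by omega)
    have h2 : p.getVert 2 = b := by rw [← hp]; exact p.getVert_length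
    rwa [h2] at this
  have hwc_ne : w ≠ c := by
    intro h
    have hx : G.dist b c = 1 := SimpleGraph.dist_eq_one_iff_adj.mpr (h ▸ hwb.symm)
    omega
  have dac : G.dist a c = 1 := SimpleGraph.dist_eq_one_iff_adj.mpr hac
  have dwb : G.dist w b = 1 := SimpleGraph.dist_eq_one_iff_adj.mpr hwb
  have dwa : G.dist w a = 1 := SimpleGraph.dist_eq_one_iff_adj.mpr haw.symm
  have dba : G.dist b a = 2 := by rwa [SimpleGraph.dist_comm] at dab
  have hab_ne : a ≠ b := fun h => by simp [h, SimpleGraph.dist_self] at dab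
  by_cases hwc : G.Adj w c
  · have dwc : G.dist w c = 1 := SimpleGraph.dist_eq_one_iff_adj.mpr hwc
    have hmem := minor_offdiag_mem (G := G) hab_ne hwc_ne hac_ne hwb.ne
    rw [dab, dwc, dac, dwb] at hmem
    norm_num at hmem
    exact hI2 ((Ideal.eq_top_iff_one _).mpr hmem)
  · have dwc : G.dist w c = 2 := dist_eq_two_of hconn hI2 hwc_ne hwc
    -- e3 : integer minor = 3
    have e3 := minor_offdiag_mem (G := G) hab_ne hwc_ne hac_ne hwb.ne
    rw [dab, dwc, dac, dwb] at e3
    norm_num at e3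
    -- e1 : rows (a,b), cols (a,c) : X a * 2 - 1 * 2
    have e1 := minor_mem (G := G) a b a c
    rw [gdm_diag, gdm_off hac_ne, gdm_off hab_ne.symm, gdm_off (fun h => by
      simp [h, SimpleGraph.dist_self] at dbc)] at e1
    rw [dac, dba, dbc] at e1
    -- e2 : rows (a,w), cols (a,b) : X a * 1 - 2 * 1
    have e2 := minor_mem (G := G) a w a b
    rw [gdm_diag, gdm_off hab_ne, gdm_off haw.ne.symm, gdm_off hwb.ne] at e2
    rw [dab, dwa, dwb] at e2
    have hcomb : (1 : MvPolynomial V ℤ) ∈ distIdeal G 2 := by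
      have := Ideal.add_mem _ (Ideal.sub_mem _ e3 e1)
        (Ideal.mul_mem_left _ ((2 : ℤ) : MvPolynomial V ℤ) e2)
      convert this using 1
      push_cast
      ring
    exact hI2 ((Ideal.eq_top_iff_one _).mpr hcomb)

lemma four_cycle (hconn : G.Connected) (hI2 : distIdeal G 2 ≠ ⊤) {a b u v : V}
    (dab : G.dist a b = 2) (huv : G.Adj u v) (hva : G.Adj v a) (hub : G.Adj u b) : False := by
  have hab_ne : a ≠ b := fun h => by simp [h, SimpleGraph.dist_self] at dab
  have dav : G.dist a v = 1 := SimpleGraph.dist_eq_one_iff_adj.mpr hva.symm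
  have dub : G.dist u b = 1 := SimpleGraph.dist_eq_one_iff_adj.mpr hub
  have duv : G.dist u v = 1 := SimpleGraph.dist_eq_one_iff_adj.mpr huv
  have hmem := minor_offdiag_mem (G := G) hab_ne huv.ne hva.ne.symm hub.ne
  rw [dab, duv, dav, dub] at hmem
  norm_num at hmem
  exact hI2 ((Ideal.eq_top_iff_one _).mpr hmem)

end fwd

section mainaux
set_option linter.unusedSectionVars false
variable [Fintype V] [DecidableEq V] {G : SimpleGraph V}

lemma exists_neighbor (hconn : G.Connected) {u v : V} (hne : v ≠ u) : ∃ w, G.Adj u w := by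
  have hr : G.Reachable u v := hconn.preconnected u v
  obtain ⟨p⟩ := hr
  cases p with
  | nil => exact absurd rfl hne
  | cons h q => exact ⟨_, h⟩

end mainaux


/-- A connected graph on at least two vertices has exactly one trivial
distance ideal (`I₁ = ⟨1⟩` and `I₂ ≠ ⟨1⟩`) if and only if it is a complete graph or a
complete bipartite graph (i.e. there is a set `s` of vertices such that two vertices are
adjacent exactly when one lies in `s` and the other does not). -/
theorem one_trivial_distIdeal_iff (n : ℕ) (hn : 2 ≤ n) (G : SimpleGraph (Fin n))
    (hG : G.Connected) :
    (distIdeal G 1 = ⊤ ∧ distIdeal G 2 ≠ ⊤) ↔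
      (G = ⊤ ∨ ∃ s : Finset (Fin n), ∀ u v, G.Adj u v ↔ ¬ ((u ∈ s) ↔ (v ∈ s))) := by
  classical
  haveI hnt : Nontrivial (Fin n) :=
    ⟨⟨⟨0, by omega⟩, ⟨1, by omega⟩, by simp [Fin.ext_iff]⟩⟩
  obtain ⟨x0, y0, hxy⟩ : ∃ u v : Fin n, G.Adj u v := by
    obtain ⟨v, hv⟩ := exists_ne (⟨0, by omega⟩ : Fin n)
    obtain ⟨w, hw⟩ := exists_neighbor hG hv.symm
    exact ⟨_, _, hw⟩
  have hI1 : distIdeal G 1 = ⊤ := by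
    rw [Ideal.eq_top_iff_one]
    have h := minor1_mem (G := G) x0 y0
    rw [gdm_off hxy.ne, SimpleGraph.dist_eq_one_iff_adj.mpr hxy] at h
    simpa using h
  constructor
  · rintro ⟨-, hI2⟩
    by_cases hcomp : G = ⊤
    · exact Or.inl hcomp
    right
    obtain ⟨a0, b0, hne0, hnadj0⟩ : ∃ a b : Fin n, a ≠ b ∧ ¬ G.Adj a b := by
      by_contra hc
      push_neg at hc
      apply hcomp
      ext u v
      simp only [SimpleGraph.top_adj]
      exact ⟨SimpleGraph.Adj.ne, fun h => hc u v h⟩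
    have d0 : G.dist a0 b0 = 2 := dist_eq_two_of hG hI2 hne0 hnadj0
    have key : ∀ u v : Fin n, ¬ G.Adj u a0 → G.Adj v a0 → G.Adj u v := by
      intro u v hu hv
      by_contra h
      have huv_ne : u ≠ v := fun e => hu (e ▸ hv)
      by_cases hua : u = a0
      · exact h (hua ▸ hv.symm)
      · have d1 : G.dist v u = 2 := by
          rw [SimpleGraph.dist_comm]
          exact dist_eq_two_of hG hI2 huv_ne h
        have d2 : G.dist u a0 = 2 := dist_eq_two_of hG hI2 hua hu
        exact not_adj_trans hG hI2 d1 d2 hv.ne hv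
    refine ⟨Finset.univ.filter (fun v => ¬ G.Adj v a0), fun u v => ?_⟩
    simp only [Finset.mem_filter, Finset.mem_univ, true_and]
    constructor
    · intro huv hiff
      by_cases hu : G.Adj u a0
      · have hv : G.Adj v a0 := by
          by_contra hv
          exact (hiff.mpr hv) hu
        have hub0 : G.Adj u b0 := by
          by_cases h1 : u = b0
          · exact absurd (h1 ▸ hu) (fun hh => hnadj0 hh.symm)
          · by_contra h2
            have d1 : G.dist u b0 = 2 := dist_eq_two_of hG hI2 h1 h2
            have d2 : G.dist b0 a0 = 2 := by rwa [SimpleGraph.dist_comm] at d0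
            exact not_adj_trans hG hI2 d1 d2 hu.ne hu
        have hvb0 : G.Adj v b0 := by
          by_cases h1 : v = b0
          · exact absurd (h1 ▸ hv) (fun hh => hnadj0 hh.symm)
          · by_contra h2
            have d1 : G.dist v b0 = 2 := dist_eq_two_of hG hI2 h1 h2
            have d2 : G.dist b0 a0 = 2 := by rwa [SimpleGraph.dist_comm] at d0
            exact not_adj_trans hG hI2 d1 d2 hv.ne hv
        exact four_cycle hG hI2 d0 huv hv hub0
      · have hv : ¬ G.Adj v a0 := hiff.mp hu
        by_cases h1 : u = a0
        · exact hv (h1 ▸ huv).symm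
        by_cases h2 : v = a0
        · exact hu (h2 ▸ huv)
        have d1 : G.dist u a0 = 2 := dist_eq_two_of hG hI2 h1 hu
        have d2 : G.dist a0 v = 2 := by
          rw [SimpleGraph.dist_comm]
          exact dist_eq_two_of hG hI2 h2 hv
        exact not_adj_trans hG hI2 d1 d2 huv.ne huv
    · intro hiff
      by_cases hu : G.Adj u a0
      · have hv : ¬ G.Adj v a0 := by tauto
        exact (key v u hv hu).symm
      · have hv : G.Adj v a0 := by tauto
        exact key u v hu hv
  · rintro (rfl | ⟨s, hs⟩)
    · refine ⟨hI1, rank_one_lemma (MvPolynomial.eval (fun _ => (1 : ℤ)))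
        (fun _ => 1) (fun _ => 1) ?_⟩
      intro u v
      by_cases h : u = v
      · subst h; rw [gdm_diag]; simp
      · rw [gdm_off h, SimpleGraph.dist_top_of_ne h]
        simp
    · have hsame : ∀ u v : Fin n, u ≠ v → ((u ∈ s) ↔ (v ∈ s)) → G.dist u v = 2 := by
        intro u v hne hiff
        have hnadj : ¬ G.Adj u v := fun h => (hs u v).mp h hiff
        obtain ⟨v', hv'⟩ := exists_ne u
        obtain ⟨w, hw⟩ := exists_neighbor hG hv'
        have hwopp : ¬ ((u ∈ s) ↔ (w ∈ s)) := (hs u w).mp hw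
        have hwv : G.Adj w v := by
          refine ((hs w v).mpr ?_).symm.symm
          tauto
        have hle : G.dist u v ≤ 2 := by
          have := SimpleGraph.dist_le (SimpleGraph.Walk.cons hw hwv.toWalk)
          simpa using this
        have hpos := hG.pos_dist_of_ne hne
        have hne1 : G.dist u v ≠ 1 := fun h => hnadj (SimpleGraph.dist_eq_one_iff_adj.mp h)
        omega
      refine ⟨hI1, rank_one_lemma
        (MvPolynomial.eval₂Hom (Int.castRingHom (ZMod 3)) (fun _ => 2))
        (fun u => if u ∈ s then 1 else -1) (fun v => if v ∈ s then -1 else 1) ?_⟩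
      intro u v
      by_cases h : u = v
      · subst h
        rw [gdm_diag]
        simp only [eval₂Hom_X']
        by_cases hu : u ∈ s <;> simp [hu] <;> decide
      · rw [gdm_off h]
        have hφ : (MvPolynomial.eval₂Hom (Int.castRingHom (ZMod 3)) (fun _ : Fin n => (2 : ZMod 3)))
            ((G.dist u v : ℤ) : MvPolynomial (Fin n) ℤ) = ((G.dist u v : ℤ) : ZMod 3) :=
          map_intCast _ _
        rw [hφ]
        by_cases hu : u ∈ s <;> by_cases hv : v ∈ s
        · rw [hsame u v h (by tauto)]; simp [hu, hv] <;> decide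
        · have : G.Adj u v := (hs u v).mpr (by tauto)
          rw [SimpleGraph.dist_eq_one_iff_adj.mpr this]
          simp [hu, hv] <;> decide
        · have : G.Adj u v := (hs u v).mpr (by tauto)
          rw [SimpleGraph.dist_eq_one_iff_adj.mpr this]
          simp [hu, hv] <;> decide
        · rw [hsame u v h (by tauto)]; simp [hu, hv] <;> decide
end

section
/- For the complete bipartite graph K_{m,n} with m ≥ 2 and n ≥ 2, with variables x_1,…,x_m and y_1,…,y_n for the vertices of the two parts, the second distance ideal is I_2(K_{m,n}, {x_1,…,x_m,y_1,…,y_n}) = ⟨x_1 − 2, …, x_m − 2, y_1 − 2, …, y_n − 2, 3⟩ in ℤ[x_1,…,x_m,y_1,…,y_n]. -/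
open Matrix MvPolynomial

variable {V : Type*}

section AuxLemmas

lemma sub_eval_mem {σ : Type*} (v : σ → ℤ) (p : MvPolynomial σ ℤ) :
    p - MvPolynomial.C (MvPolynomial.eval v p) ∈
      Ideal.span (Set.range fun u => (MvPolynomial.X u : MvPolynomial σ ℤ) - MvPolynomial.C (v u)) := by
  induction p using MvPolynomial.induction_on with
  | C a => simp
  | add p q hp hq =>
      have h := Ideal.add_mem _ hp hq
      rw [sub_add_sub_comm, ← map_add, ← map_add] at h
      exact h
  | mul_X p u hp =>
      have h1 : (MvPolynomial.X u : MvPolynomial σ ℤ) - MvPolynomial.C (v u) ∈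
          Ideal.span (Set.range fun u => (MvPolynomial.X u : MvPolynomial σ ℤ) - MvPolynomial.C (v u)) :=
        Ideal.subset_span ⟨u, rfl⟩
      have heq : p * MvPolynomial.X u - MvPolynomial.C (MvPolynomial.eval v (p * MvPolynomial.X u)) =
          p * (MvPolynomial.X u - MvPolynomial.C (v u)) +
            (p - MvPolynomial.C (MvPolynomial.eval v p)) * MvPolynomial.C (v u) := by
        rw [_root_.map_mul, _root_.map_mul, eval_X]; ring
      rw [heq]
      exact Ideal.add_mem _ (Ideal.mul_mem_left _ _ h1) (Ideal.mul_mem_right _ _ hp)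

/-- Evaluation at all variables equal to `2`, followed by reduction mod `3`. -/
noncomputable def phi3 (σ : Type*) : MvPolynomial σ ℤ →+* ZMod 3 :=
  (Int.castRingHom (ZMod 3)).comp (MvPolynomial.eval fun _ => 2)

section CBG
variable (m n : ℕ)

lemma cbg_dist_lr (i : Fin m) (j : Fin n) :
    (completeBipartiteGraph (Fin m) (Fin n)).dist (Sum.inl i) (Sum.inr j) = 1 := by
  rw [SimpleGraph.dist_eq_one_iff_adj]; simp

lemma cbg_dist_rl (i : Fin m) (j : Fin n) :
    (completeBipartiteGraph (Fin m) (Fin n)).dist (Sum.inr j) (Sum.inl i) = 1 := by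
  rw [SimpleGraph.dist_eq_one_iff_adj]; simp

lemma cbg_dist_ll (hn : 1 ≤ n) {i i' : Fin m} (h : i ≠ i') :
    (completeBipartiteGraph (Fin m) (Fin n)).dist (Sum.inl i) (Sum.inl i') = 2 := by
  have hadj : ∀ (a : Fin m) (b : Fin n),
      (completeBipartiteGraph (Fin m) (Fin n)).Adj (Sum.inl a) (Sum.inr b) := by intro a b; simp
  have h2 := SimpleGraph.dist_le
    (SimpleGraph.Walk.cons (hadj i ⟨0, hn⟩)
      (SimpleGraph.Walk.cons ((hadj i' ⟨0, hn⟩).symm) SimpleGraph.Walk.nil))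
  simp only [SimpleGraph.Walk.length_cons, SimpleGraph.Walk.length_nil] at h2
  have h0 : (completeBipartiteGraph (Fin m) (Fin n)).dist (Sum.inl i) (Sum.inl i') ≠ 0 := by
    intro hc
    rw [SimpleGraph.dist_eq_zero_iff_eq_or_not_reachable] at hc
    rcases hc with hc | hc
    · exact h (Sum.inl_injective hc)
    · exact hc ⟨SimpleGraph.Walk.cons (hadj i ⟨0, hn⟩)
        (SimpleGraph.Walk.cons ((hadj i' ⟨0, hn⟩).symm) SimpleGraph.Walk.nil)⟩
  have h1 : (completeBipartiteGraph (Fin m) (Fin n)).dist (Sum.inl i) (Sum.inl i') ≠ 1 := by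
    intro hc; rw [SimpleGraph.dist_eq_one_iff_adj] at hc; simp at hc
  omega

lemma cbg_dist_rr (hm : 1 ≤ m) {j j' : Fin n} (h : j ≠ j') :
    (completeBipartiteGraph (Fin m) (Fin n)).dist (Sum.inr j) (Sum.inr j') = 2 := by
  have hadj : ∀ (a : Fin m) (b : Fin n),
      (completeBipartiteGraph (Fin m) (Fin n)).Adj (Sum.inr b) (Sum.inl a) := by intro a b; simp
  have h2 := SimpleGraph.dist_le
    (SimpleGraph.Walk.cons (hadj ⟨0, hm⟩ j)
      (SimpleGraph.Walk.cons ((hadj ⟨0, hm⟩ j').symm) SimpleGraph.Walk.nil))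
  simp only [SimpleGraph.Walk.length_cons, SimpleGraph.Walk.length_nil] at h2
  have h0 : (completeBipartiteGraph (Fin m) (Fin n)).dist (Sum.inr j) (Sum.inr j') ≠ 0 := by
    intro hc
    rw [SimpleGraph.dist_eq_zero_iff_eq_or_not_reachable] at hc
    rcases hc with hc | hc
    · exact h (Sum.inr_injective hc)
    · exact hc ⟨SimpleGraph.Walk.cons (hadj ⟨0, hm⟩ j)
        (SimpleGraph.Walk.cons ((hadj ⟨0, hm⟩ j').symm) SimpleGraph.Walk.nil)⟩
  have h1 : (completeBipartiteGraph (Fin m) (Fin n)).dist (Sum.inr j) (Sum.inr j') ≠ 1 := by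
    intro hc; rw [SimpleGraph.dist_eq_one_iff_adj] at hc; simp at hc
  omega

lemma cbgM_diag (u : Fin m ⊕ Fin n) :
    genDistMatrix (completeBipartiteGraph (Fin m) (Fin n)) u u = MvPolynomial.X u := by
  simp [genDistMatrix, distMatrix, Matrix.add_apply, Matrix.map_apply, Matrix.diagonal_apply_eq,
    SimpleGraph.dist_self]

lemma cbgM_lr (i : Fin m) (j : Fin n) :
    genDistMatrix (completeBipartiteGraph (Fin m) (Fin n)) (Sum.inl i) (Sum.inr j) = 1 := by
  simp [genDistMatrix, distMatrix, Matrix.add_apply, Matrix.map_apply, Matrix.diagonal_apply_ne,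
    cbg_dist_lr]

lemma cbgM_rl (i : Fin m) (j : Fin n) :
    genDistMatrix (completeBipartiteGraph (Fin m) (Fin n)) (Sum.inr j) (Sum.inl i) = 1 := by
  simp [genDistMatrix, distMatrix, Matrix.add_apply, Matrix.map_apply, Matrix.diagonal_apply_ne,
    cbg_dist_rl]

lemma cbgM_ll (hn : 1 ≤ n) {i i' : Fin m} (h : i ≠ i') :
    genDistMatrix (completeBipartiteGraph (Fin m) (Fin n)) (Sum.inl i) (Sum.inl i') = 2 := by
  have hne : (Sum.inl i : Fin m ⊕ Fin n) ≠ Sum.inl i' := by simp [h]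
  simp [genDistMatrix, distMatrix, Matrix.add_apply, Matrix.map_apply,
    Matrix.diagonal_apply_ne _ hne, cbg_dist_ll m n hn h]

lemma cbgM_rr (hm : 1 ≤ m) {j j' : Fin n} (h : j ≠ j') :
    genDistMatrix (completeBipartiteGraph (Fin m) (Fin n)) (Sum.inr j) (Sum.inr j') = 2 := by
  have hne : (Sum.inr j : Fin m ⊕ Fin n) ≠ Sum.inr j' := by simp [h]
  simp [genDistMatrix, distMatrix, Matrix.add_apply, Matrix.map_apply,
    Matrix.diagonal_apply_ne _ hne, cbg_dist_rr m n hm h]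

lemma cbg_phi_entry (hm : 1 ≤ m) (hn : 1 ≤ n) (u v : Fin m ⊕ Fin n) :
    phi3 _ (genDistMatrix (completeBipartiteGraph (Fin m) (Fin n)) u v) =
      if u.isLeft = v.isLeft then 2 else 1 := by
  rcases u with i | j <;> rcases v with i' | j'
  · by_cases h : i = i'
    · subst h; rw [cbgM_diag]; simp [phi3]
    · rw [cbgM_ll m n hn h]; simp [phi3]
  · rw [cbgM_lr]; simp [phi3]
  · rw [cbgM_rl]; simp [phi3]
  · by_cases h : j = j'
    · subst h; rw [cbgM_diag]; simp [phi3]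
    · rw [cbgM_rr m n hm h]; simp [phi3]

lemma cbg_phi_minor (hm : 1 ≤ m) (hn : 1 ≤ n)
    (p : (Fin 2 → Fin m ⊕ Fin n) × (Fin 2 → Fin m ⊕ Fin n)) :
    phi3 _ ((genDistMatrix (completeBipartiteGraph (Fin m) (Fin n))).submatrix p.1 p.2).det
      = 0 := by
  rw [Matrix.det_fin_two, _root_.map_sub, _root_.map_mul, _root_.map_mul]
  simp only [Matrix.submatrix_apply]
  rw [cbg_phi_entry m n hm hn, cbg_phi_entry m n hm hn,
    cbg_phi_entry m n hm hn, cbg_phi_entry m n hm hn]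
  rcases p.1 0 with a | a <;> rcases p.1 1 with b | b <;>
    rcases p.2 0 with c | c <;> rcases p.2 1 with d | d <;> simp <;> decide

end CBG

end AuxLemmas

/-- For the complete bipartite graph `K_{m,n}` with `m, n ≥ 2`, with
variables `x_i` and `y_j` for the vertices of the two parts, the second distance ideal is
`⟨x₁ - 2, …, x_m - 2, y₁ - 2, …, y_n - 2, 3⟩`. -/
theorem distIdeal_two_completeBipartite (m n : ℕ) (hm : 2 ≤ m) (hn : 2 ≤ n) :
    distIdeal (completeBipartiteGraph (Fin m) (Fin n)) 2 =
      Ideal.span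
        ((Set.range fun i : Fin m =>
            (MvPolynomial.X (Sum.inl i) : MvPolynomial (Fin m ⊕ Fin n) ℤ) - 2) ∪
          (Set.range fun j : Fin n =>
            (MvPolynomial.X (Sum.inr j) : MvPolynomial (Fin m ⊕ Fin n) ℤ) - 2) ∪
          {3}) := by
  
  set S : Set (MvPolynomial (Fin m ⊕ Fin n) ℤ) :=
    ((Set.range fun i : Fin m =>
        (MvPolynomial.X (Sum.inl i) : MvPolynomial (Fin m ⊕ Fin n) ℤ) - 2) ∪
      (Set.range fun j : Fin n =>
        (MvPolynomial.X (Sum.inr j) : MvPolynomial (Fin m ⊕ Fin n) ℤ) - 2) ∪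
      {3}) with hS
  have h3mem : (3 : MvPolynomial (Fin m ⊕ Fin n) ℤ) ∈ Ideal.span S :=
    Ideal.subset_span (by right; rfl)
  have hC2 : (MvPolynomial.C 2 : MvPolynomial (Fin m ⊕ Fin n) ℤ) = 2 := by
    norm_num
  apply le_antisymm
  · rw [distIdeal, minorsIdeal, Ideal.span_le]
    rintro _ ⟨p, rfl⟩
    set d := ((genDistMatrix (completeBipartiteGraph (Fin m) (Fin n))).submatrix p.1 p.2).det
      with hd
    have h0 : phi3 _ d = 0 := cbg_phi_minor m n (by omega) (by omega) p
    have hdvd : (3 : ℤ) ∣ MvPolynomial.eval (fun _ => 2) d := by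
      have hcast : ((MvPolynomial.eval (fun _ => 2) d : ℤ) : ZMod 3) = 0 := h0
      exact (ZMod.intCast_zmod_eq_zero_iff_dvd _ 3).1 hcast
    obtain ⟨k, hk⟩ := hdvd
    have hsplit : d = (d - MvPolynomial.C (MvPolynomial.eval (fun _ => 2) d)) +
        MvPolynomial.C (MvPolynomial.eval (fun _ => 2) d) := by ring
    show d ∈ Ideal.span S
    rw [hsplit]
    refine Ideal.add_mem _ ?_ ?_
    · have hsub : Set.range (fun u : Fin m ⊕ Fin n =>
          (MvPolynomial.X u : MvPolynomial (Fin m ⊕ Fin n) ℤ) -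
            MvPolynomial.C ((fun _ => (2:ℤ)) u)) ⊆ Ideal.span S := by
        rintro _ ⟨u, rfl⟩
        rcases u with i | j
        · refine Ideal.subset_span ?_
          left; left
          exact ⟨i, by simp [hC2]⟩
        · refine Ideal.subset_span ?_
          left; right
          exact ⟨j, by simp [hC2]⟩
      exact Ideal.span_le.2 hsub (sub_eval_mem (fun _ => 2) d)
    · rw [hk, _root_.map_mul]
      have hC3 : (MvPolynomial.C 3 : MvPolynomial (Fin m ⊕ Fin n) ℤ) = 3 := by norm_num
      rw [hC3]
      exact Ideal.mul_mem_right _ _ h3mem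
  · rw [Ideal.span_le]
    rintro x hx
    rw [hS] at hx
    simp only [Set.mem_union, Set.mem_range, Set.mem_singleton_iff] at hx
    rw [SetLike.mem_coe, distIdeal, minorsIdeal]
    rcases hx with (⟨i, rfl⟩ | ⟨j, rfl⟩) | rfl
    · set i' : Fin m := if i = ⟨0, by omega⟩ then ⟨1, by omega⟩ else ⟨0, by omega⟩ with hi'
      have hii' : i' ≠ i := by
        rw [hi']; split <;> rename_i h
        · rw [h]; intro hc; exact absurd (congrArg Fin.val hc) (by norm_num)
        · exact fun hc => h hc.symm
      refine Ideal.subset_span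
        ⟨(![Sum.inl i, Sum.inl i'], ![Sum.inl i, Sum.inr ⟨0, by omega⟩]), ?_⟩
      beta_reduce
      rw [Matrix.det_fin_two]
      simp only [Matrix.submatrix_apply, Matrix.cons_val_zero, Matrix.cons_val_one,
        Matrix.head_cons]
      rw [cbgM_diag, cbgM_lr, cbgM_lr, cbgM_ll m n (by omega) hii']
      ring
    · set j' : Fin n := if j = ⟨0, by omega⟩ then ⟨1, by omega⟩ else ⟨0, by omega⟩ with hj'
      have hjj' : j' ≠ j := by
        rw [hj']; split <;> rename_i h
        · rw [h]; intro hc; exact absurd (congrArg Fin.val hc) (by norm_num)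
        · exact fun hc => h hc.symm
      refine Ideal.subset_span
        ⟨(![Sum.inr j, Sum.inr j'], ![Sum.inr j, Sum.inl ⟨0, by omega⟩]), ?_⟩
      beta_reduce
      rw [Matrix.det_fin_two]
      simp only [Matrix.submatrix_apply, Matrix.cons_val_zero, Matrix.cons_val_one,
        Matrix.head_cons]
      rw [cbgM_diag, cbgM_rl, cbgM_rl, cbgM_rr m n (by omega) hjj']
      ring
    · have h01m : (⟨0, by omega⟩ : Fin m) ≠ ⟨1, by omega⟩ := by
        intro hc; exact absurd (congrArg Fin.val hc) (by norm_num)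
      have h01n : (⟨0, by omega⟩ : Fin n) ≠ ⟨1, by omega⟩ := by
        intro hc; exact absurd (congrArg Fin.val hc) (by norm_num)
      refine Ideal.subset_span
        ⟨(![Sum.inl ⟨0, by omega⟩, Sum.inr ⟨0, by omega⟩],
          ![Sum.inl ⟨1, by omega⟩, Sum.inr ⟨1, by omega⟩]), ?_⟩
      beta_reduce
      rw [Matrix.det_fin_two]
      simp only [Matrix.submatrix_apply, Matrix.cons_val_zero, Matrix.cons_val_one,
        Matrix.head_cons]
      rw [cbgM_ll m n (by omega) h01m, cbgM_rr m n (by omega) h01n, cbgM_lr, cbgM_rl]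
      ring
end
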